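/- arXiv:1902.11144 — 4 statements merged into one kernel-verified Lean document; each statement's English description precedes it below -/
import Mathlib

section
/- The self-affine measure μ of the approximate square F_σ equals (∏_{h=1}^{ℓ(k)} p_{i_h j_h})·(∏_{h=ℓ(k)+1}^{k} q_{j_h}), where q_j = Σ_{i : (i,j)∈G} p_{ij}. -/
open MeasureTheory Real Set

/-- The affine contraction `f_{ij}(x,y) = ((x+i)/n, (y+j)/m)` on `ℝ²`. -/
noncomputable def fAff (n m : ℕ) (e : ℕ × ℕ) (x : EuclideanSpace ℝ (Fin 2)) :
    EuclideanSpace ℝ (Fin 2) := WithLp.toLp 2 ![(x 0 + e.1) / n, (x 1 + e.2) / m]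

namespace Stmt1Aux

abbrev E2 := EuclideanSpace ℝ (Fin 2)

lemma measurable_coord (i : Fin 2) : Measurable fun x : E2 => x i :=
  (EuclideanSpace.proj i).continuous.measurable

def Rect (a b c d : ℝ) : Set E2 := {x | x 0 ∈ Icc a b ∧ x 1 ∈ Icc c d}

lemma mem_rect {a b c d : ℝ} {x : E2} :
    x ∈ Rect a b c d ↔ (a ≤ x 0 ∧ x 0 ≤ b) ∧ (c ≤ x 1 ∧ x 1 ≤ d) := by
  simp [Rect, mem_Icc]

lemma measurableSet_rect {a b c d : ℝ} : MeasurableSet (Rect a b c d) :=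
  ((measurable_coord 0) measurableSet_Icc).inter ((measurable_coord 1) measurableSet_Icc)

lemma measurable_fAff (n m : ℕ) (e : ℕ × ℕ) : Measurable (fAff n m e) := by
  unfold fAff
  refine (WithLp.measurable_toLp 2 (Fin 2 → ℝ)).comp ?_
  apply measurable_pi_lambda
  intro i
  fin_cases i
  · simpa [fAff] using ((measurable_coord 0).add_const _).div_const _
  · simpa [fAff] using ((measurable_coord 1).add_const _).div_const _

lemma fAff_apply0 (n m : ℕ) (e : ℕ × ℕ) (x : E2) : fAff n m e x 0 = (x 0 + e.1) / n := by simp [fAff]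
lemma fAff_apply1 (n m : ℕ) (e : ℕ × ℕ) (x : E2) : fAff n m e x 1 = (x 1 + e.2) / m := by simp [fAff]

lemma fAff_preimage_rect {n m : ℕ} (hn : 0 < n) (hm : 0 < m) (e : ℕ × ℕ) (a b c d : ℝ) :
    fAff n m e ⁻¹' Rect a b c d =
      Rect (n * a - e.1) (n * b - e.1) (m * c - e.2) (m * d - e.2) := by
  ext x
  have hn' : (0:ℝ) < n := by exact_mod_cast hn
  have hm' : (0:ℝ) < m := by exact_mod_cast hm
  simp only [Rect, mem_preimage, mem_setOf_eq, fAff_apply0, fAff_apply1, mem_Icc,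
    le_div_iff₀ hn', div_le_iff₀ hn', le_div_iff₀ hm', div_le_iff₀ hm']
  constructor <;> rintro ⟨⟨h1, h2⟩, h3, h4⟩ <;> constructor <;> constructor <;> linarith

lemma fAff_preimage_line {n m : ℕ} (hn : 0 < n) (hm : 0 < m) (e : ℕ × ℕ) (c : ℝ) :
    fAff n m e ⁻¹' {x : E2 | x 1 = c} = {x : E2 | x 1 = m * c - e.2} := by
  ext x
  have hm' : (0:ℝ) < m := by exact_mod_cast hm
  simp only [mem_preimage, mem_setOf_eq, fAff_apply1, div_eq_iff hm'.ne']
  constructor <;> intro h <;> linarith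

lemma measure_apply_sum {n m : ℕ} {G : Finset (ℕ × ℕ)} {p : ℕ × ℕ → ℝ}
    {μ : Measure E2} (hμ : μ = ∑ e ∈ G, ENNReal.ofReal (p e) • μ.map (fAff n m e))
    {S : Set E2} (hS : MeasurableSet S) :
    μ S = ∑ e ∈ G, ENNReal.ofReal (p e) * μ (fAff n m e ⁻¹' S) := by
  conv_lhs => rw [hμ]
  rw [Measure.finset_sum_apply]
  refine Finset.sum_congr rfl fun e _ => ?_
  rw [Measure.smul_apply, Measure.map_apply (measurable_fAff n m e) hS, smul_eq_mul]

lemma sum_ofReal_p {G : Finset (ℕ × ℕ)} {p : ℕ × ℕ → ℝ}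
    (hp : ∀ e ∈ G, 0 < p e) (hp1 : ∑ e ∈ G, p e = 1) :
    ∑ e ∈ G, ENNReal.ofReal (p e) = 1 := by
  rw [← ENNReal.ofReal_sum_of_nonneg (fun e he => (hp e he).le), hp1, ENNReal.ofReal_one]

def Bst (t : ℝ) : Set E2 := Rect (-t) (1+t) (-t) (1+t)

lemma Bst_mono {s t : ℝ} (h : s ≤ t) : Bst s ⊆ Bst t := by
  intro x hx
  obtain ⟨⟨h1,h2⟩,h3,h4⟩ := hx
  exact ⟨⟨by linarith, by linarith⟩, by linarith, by linarith⟩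

lemma measurableSet_Bst {t : ℝ} : MeasurableSet (Bst t) := measurableSet_rect

lemma measure_Bst_step {n m : ℕ} (hm : 2 ≤ m) (hmn : m ≤ n) {G : Finset (ℕ × ℕ)}
    (hGsub : ∀ e ∈ G, e.1 < n ∧ e.2 < m) {p : ℕ × ℕ → ℝ}
    (hp : ∀ e ∈ G, 0 < p e) (hp1 : ∑ e ∈ G, p e = 1) {μ : Measure E2}
    (hμ : μ = ∑ e ∈ G, ENNReal.ofReal (p e) • μ.map (fAff n m e))
    {t : ℝ} (ht : 0 ≤ t) : μ (Bst (m * t)) ≤ μ (Bst t) := by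
  have hm' : (2:ℝ) ≤ m := by exact_mod_cast hm
  have hn' : (m:ℝ) ≤ n := by exact_mod_cast hmn
  calc μ (Bst (m*t)) = ∑ e ∈ G, ENNReal.ofReal (p e) * μ (Bst (m*t)) := by
        rw [← Finset.sum_mul, sum_ofReal_p hp hp1, one_mul]
    _ ≤ ∑ e ∈ G, ENNReal.ofReal (p e) * μ (fAff n m e ⁻¹' Bst t) := by
        refine Finset.sum_le_sum fun e he => ?_
        refine mul_le_mul_right (measure_mono ?_) _
        show Bst (m*t) ⊆ fAff n m e ⁻¹' Rect (-t) (1+t) (-t) (1+t)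
        rw [fAff_preimage_rect (by omega) (by omega)]
        intro x hx
        obtain ⟨⟨h1,h2⟩,h3,h4⟩ := hx
        have hi : (e.1:ℝ) + 1 ≤ n := by exact_mod_cast Nat.succ_le_of_lt (hGsub e he).1
        have hj : (e.2:ℝ) + 1 ≤ m := by exact_mod_cast Nat.succ_le_of_lt (hGsub e he).2
        have hi0 : (0:ℝ) ≤ e.1 := Nat.cast_nonneg _
        have hj0 : (0:ℝ) ≤ e.2 := Nat.cast_nonneg _
        refine ⟨⟨?_, ?_⟩, ?_, ?_⟩ <;> nlinarith
    _ = μ (Bst t) := (measure_apply_sum hμ measurableSet_rect).symm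

lemma measure_Bst_one {n m : ℕ} (hm : 2 ≤ m) (hmn : m ≤ n) {G : Finset (ℕ × ℕ)}
    (hGsub : ∀ e ∈ G, e.1 < n ∧ e.2 < m) {p : ℕ × ℕ → ℝ}
    (hp : ∀ e ∈ G, 0 < p e) (hp1 : ∑ e ∈ G, p e = 1) {μ : Measure E2}
    (hprob : IsProbabilityMeasure μ)
    (hμ : μ = ∑ e ∈ G, ENNReal.ofReal (p e) • μ.map (fAff n m e))
    {t : ℝ} (ht : 0 < t) : μ (Bst t) = 1 := by
  have hm1 : (1:ℝ) < m := by
    have : (2:ℝ) ≤ m := by exact_mod_cast hm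
    linarith
  have hmono : Monotone fun s : ℕ => Bst ((m:ℝ)^s * t) := by
    intro s s' hss
    exact Bst_mono (mul_le_mul_of_nonneg_right (pow_le_pow_right₀ hm1.le hss) ht.le)
  have hcov : (⋃ s : ℕ, Bst ((m:ℝ)^s * t)) = univ := by
    ext x
    simp only [mem_iUnion, mem_univ, iff_true]
    obtain ⟨s, hs⟩ := pow_unbounded_of_one_lt ((max |x 0| |x 1|) / t) hm1
    refine ⟨s, ?_⟩
    rw [div_lt_iff₀ ht] at hs
    have h0 : |x 0| ≤ (m:ℝ)^s * t := le_of_lt (lt_of_le_of_lt (le_max_left _ _) hs)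
    have h1 : |x 1| ≤ (m:ℝ)^s * t := le_of_lt (lt_of_le_of_lt (le_max_right _ _) hs)
    rw [abs_le] at h0 h1
    exact ⟨⟨by linarith [h0.1], by linarith [h0.2]⟩, by linarith [h1.1], by linarith [h1.2]⟩
  have hpows : ∀ s : ℕ, μ (Bst ((m:ℝ)^s * t)) = μ (Bst t) := by
    intro s
    induction s with
    | zero => simp
    | succ s ih =>
      have hmu : (0:ℝ) < (m:ℝ)^s * t := by positivity
      have h1 : (m:ℝ)^(s+1) * t = m * ((m:ℝ)^s * t) := by ring
      have hle := measure_Bst_step hm hmn hGsub hp hp1 hμ (t := (m:ℝ)^s * t) hmu.le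
      have hge : μ (Bst ((m:ℝ)^s*t)) ≤ μ (Bst ((m:ℝ)*((m:ℝ)^s * t))) :=
        measure_mono (Bst_mono (by nlinarith))
      rw [h1, le_antisymm hle hge, ih]
  have huniv : μ univ = ⨆ s : ℕ, μ (Bst ((m:ℝ)^s * t)) := by
    rw [← hcov]
    exact hmono.directed_le.measure_iUnion
  simp only [hpows, iSup_const, measure_univ] at huniv
  exact huniv.symm

def Qset : Set E2 := Rect 0 1 0 1

lemma measure_Q_one {n m : ℕ} (hm : 2 ≤ m) (hmn : m ≤ n) {G : Finset (ℕ × ℕ)}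
    (hGsub : ∀ e ∈ G, e.1 < n ∧ e.2 < m) {p : ℕ × ℕ → ℝ}
    (hp : ∀ e ∈ G, 0 < p e) (hp1 : ∑ e ∈ G, p e = 1) {μ : Measure E2}
    (hprob : IsProbabilityMeasure μ)
    (hμ : μ = ∑ e ∈ G, ENNReal.ofReal (p e) • μ.map (fAff n m e)) :
    μ Qset = 1 := by
  have hcompl : μ Qsetᶜ = 0 := by
    have hsub : Qsetᶜ ⊆ ⋃ s : ℕ, (Bst (((s:ℝ)+1)⁻¹))ᶜ := by
      intro x hx
      simp only [Qset, mem_compl_iff, mem_rect, not_and_or, not_le] at hx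
      simp only [mem_iUnion, mem_compl_iff]
      have key : ∃ δ : ℝ, 0 < δ ∧ ∀ t : ℝ, 0 < t → t < δ → x ∉ Bst t := by
        rcases hx with ((h | h) | (h | h))
        · exact ⟨-x 0, by linarith, fun t ht htδ hmem => by
            obtain ⟨⟨h1,h2⟩,h3,h4⟩ := hmem; linarith⟩
        · exact ⟨x 0 - 1, by linarith, fun t ht htδ hmem => by
            obtain ⟨⟨h1,h2⟩,h3,h4⟩ := hmem; linarith⟩
        · exact ⟨-x 1, by linarith, fun t ht htδ hmem => by
            obtain ⟨⟨h1,h2⟩,h3,h4⟩ := hmem; linarith⟩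
        · exact ⟨x 1 - 1, by linarith, fun t ht htδ hmem => by
            obtain ⟨⟨h1,h2⟩,h3,h4⟩ := hmem; linarith⟩
      obtain ⟨δ, hδ, hbad⟩ := key
      obtain ⟨s, hs⟩ := exists_nat_one_div_lt hδ
      rw [one_div] at hs
      exact ⟨s, hbad _ (by positivity) hs⟩
    have hzero : ∀ s : ℕ, μ ((Bst (((s:ℝ)+1)⁻¹))ᶜ) = 0 := by
      intro s
      rw [measure_compl measurableSet_Bst (measure_ne_top μ _),
        measure_Bst_one hm hmn hGsub hp hp1 hprob hμ (by positivity), measure_univ, tsub_self]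
    refine le_antisymm ?_ zero_le
    calc μ Qsetᶜ ≤ μ (⋃ s : ℕ, (Bst (((s:ℝ)+1)⁻¹))ᶜ) := measure_mono hsub
      _ ≤ ∑' s : ℕ, μ ((Bst (((s:ℝ)+1)⁻¹))ᶜ) := measure_iUnion_le _
      _ = 0 := by simp [hzero]
  have := measure_add_measure_compl (μ := μ) (s := Qset) measurableSet_rect
  rw [hcompl, measure_univ, add_zero] at this
  exact this

lemma measure_inter_Q {μ : Measure E2} (hQ1 : μ Qset = 1)
    (hprob : IsProbabilityMeasure μ) {S : Set E2} (hS : MeasurableSet S) :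
    μ S = μ (S ∩ Qset) := by
  have hQm : MeasurableSet Qset := measurableSet_rect
  have h := measure_inter_add_diff (μ := μ) S hQm
  have hdiff : μ (S \ Qset) = 0 := by
    refine le_antisymm ?_ zero_le
    calc μ (S \ Qset) ≤ μ Qsetᶜ := measure_mono fun x hx => hx.2
      _ = 0 := by
          rw [measure_compl hQm (measure_ne_top μ _), hQ1, measure_univ, tsub_self]
  rw [← h, hdiff, add_zero]

lemma measure_line {n m : ℕ} (hm : 2 ≤ m) (hmn : m ≤ n) {G : Finset (ℕ × ℕ)}
    (hGsub : ∀ e ∈ G, e.1 < n ∧ e.2 < m) {p : ℕ × ℕ → ℝ}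
    (hp : ∀ e ∈ G, 0 < p e) (hp1 : ∑ e ∈ G, p e = 1) {μ : Measure E2}
    (hprob : IsProbabilityMeasure μ)
    (hμ : μ = ∑ e ∈ G, ENNReal.ofReal (p e) • μ.map (fAff n m e))
    (c : ℝ) (j₀ : ℕ)
    (hfix : ∀ e ∈ G, e.2 = j₀ → (m:ℝ) * c - (e.2:ℝ) = c)
    (hmove : ∀ e ∈ G, e.2 ≠ j₀ → ((m:ℝ) * c - (e.2:ℝ) < 0 ∨ 1 < (m:ℝ) * c - (e.2:ℝ)))
    (hwit : ∃ e₀ ∈ G, e₀.2 ≠ j₀) :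
    μ {x : E2 | x 1 = c} = 0 := by
  have hQ1 : μ Qset = 1 := measure_Q_one hm hmn hGsub hp hp1 hprob hμ
  have hmeas : MeasurableSet {x : E2 | x 1 = c} :=
    (measurable_coord 1) (measurableSet_singleton c)
  have hkey : ∀ e ∈ G, μ (fAff n m e ⁻¹' {x : E2 | x 1 = c})
      = if e.2 = j₀ then μ {x : E2 | x 1 = c} else 0 := by
    intro e he
    rw [fAff_preimage_line (by omega) (by omega)]
    by_cases hcase : e.2 = j₀
    · rw [if_pos hcase, hfix e he hcase]
    · rw [if_neg hcase]
      have hS' : MeasurableSet {x : E2 | x 1 = (m:ℝ) * c - (e.2:ℝ)} :=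
        (measurable_coord 1) (measurableSet_singleton _)
      rw [measure_inter_Q hQ1 hprob hS']
      have hempty : {x : E2 | x 1 = (m:ℝ) * c - (e.2:ℝ)} ∩ Qset = (∅ : Set E2) := by
        ext x
        simp only [mem_inter_iff, mem_setOf_eq, Qset, mem_rect, mem_empty_iff_false, iff_false]
        rintro ⟨hx1, ⟨_, _⟩, hx2, hx3⟩
        rcases hmove e he hcase with h | h <;> rw [hx1] at hx2 hx3 <;> linarith
      rw [hempty]
      exact measure_empty
  have heq : μ {x : E2 | x 1 = c} =
      ENNReal.ofReal (∑ e ∈ G.filter (fun e => e.2 = j₀), p e) * μ {x : E2 | x 1 = c} := by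
    conv_lhs => rw [measure_apply_sum hμ hmeas]
    rw [ENNReal.ofReal_sum_of_nonneg (fun e he => (hp e (Finset.mem_filter.mp he).1).le),
      Finset.sum_mul, Finset.sum_filter]
    refine Finset.sum_congr rfl fun e he => ?_
    rw [hkey e he]
    by_cases hcase : e.2 = j₀ <;> simp [hcase]
  obtain ⟨e₀, he₀, he₀n⟩ := hwit
  have hlt : ∑ e ∈ G.filter (fun e => e.2 = j₀), p e < 1 := by
    rw [← hp1]
    refine Finset.sum_lt_sum_of_subset (Finset.filter_subset _ _) he₀ ?_ (hp e₀ he₀)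
      (fun e he _ => (hp e he).le)
    simp [he₀n]
  have hfin : μ {x : E2 | x 1 = c} ≠ ⊤ := measure_ne_top μ _
  by_contra hne
  have hlt' : ENNReal.ofReal (∑ e ∈ G.filter (fun e => e.2 = j₀), p e) < 1 := by
    rw [← ENNReal.ofReal_one]
    exact ENNReal.ofReal_lt_ofReal_iff_of_nonneg (Finset.sum_nonneg
      (fun e he => (hp e (Finset.mem_filter.mp he).1).le)) |>.mpr hlt
  have hcontra : ENNReal.ofReal (∑ e ∈ G.filter (fun e => e.2 = j₀), p e)
      * μ {x : E2 | x 1 = c} < 1 * μ {x : E2 | x 1 = c} :=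
    ENNReal.mul_lt_mul_iff_left hne hfin |>.mpr hlt'
  rw [one_mul, ← heq] at hcontra
  exact lt_irrefl _ hcontra

lemma measure_line_zero {n m : ℕ} (hm : 2 ≤ m) (hmn : m ≤ n) {G : Finset (ℕ × ℕ)}
    (hGsub : ∀ e ∈ G, e.1 < n ∧ e.2 < m) {p : ℕ × ℕ → ℝ}
    (hp : ∀ e ∈ G, 0 < p e) (hp1 : ∑ e ∈ G, p e = 1) {μ : Measure E2}
    (hprob : IsProbabilityMeasure μ)
    (hμ : μ = ∑ e ∈ G, ENNReal.ofReal (p e) • μ.map (fAff n m e))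
    (hwit : ∃ e₀ ∈ G, e₀.2 ≠ 0) :
    μ {x : E2 | x 1 = (0:ℝ)} = 0 := by
  refine measure_line hm hmn hGsub hp hp1 hprob hμ 0 0 (fun e he h2 => by
      rw [h2]; simp) (fun e he h2 => ?_) hwit
  left
  have : (1:ℝ) ≤ (e.2:ℝ) := by exact_mod_cast Nat.one_le_iff_ne_zero.mpr h2
  nlinarith

lemma measure_line_one {n m : ℕ} (hm : 2 ≤ m) (hmn : m ≤ n) {G : Finset (ℕ × ℕ)}
    (hGsub : ∀ e ∈ G, e.1 < n ∧ e.2 < m) {p : ℕ × ℕ → ℝ}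
    (hp : ∀ e ∈ G, 0 < p e) (hp1 : ∑ e ∈ G, p e = 1) {μ : Measure E2}
    (hprob : IsProbabilityMeasure μ)
    (hμ : μ = ∑ e ∈ G, ENNReal.ofReal (p e) • μ.map (fAff n m e))
    (hwit : ∃ e₀ ∈ G, e₀.2 ≠ m - 1) :
    μ {x : E2 | x 1 = (1:ℝ)} = 0 := by
  refine measure_line hm hmn hGsub hp hp1 hprob hμ 1 (m-1) (fun e he h2 => ?_)
    (fun e he h2 => ?_) hwit
  · have h2' : e.2 + 1 = m := by have := (hGsub e he).2; omega
    have : ((e.2:ℝ)) + 1 = m := by exact_mod_cast h2'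
    linarith
  · right
    have h2' : e.2 + 2 ≤ m := by have := (hGsub e he).2; omega
    have : ((e.2:ℝ)) + 2 ≤ m := by exact_mod_cast h2'
    linarith

/-- digit sum `∑_{h=1}^{N} j_h / r^h`. -/
noncomputable def digS (r : ℝ) (j : ℕ → ℕ) (N : ℕ) : ℝ := ∑ h ∈ Finset.range N, (j (h+1) : ℝ) / r^(h+1)

lemma digS_nonneg {r : ℝ} (hr : 0 < r) (j : ℕ → ℕ) (N : ℕ) : 0 ≤ digS r j N :=
  Finset.sum_nonneg fun h _ => div_nonneg (Nat.cast_nonneg _) (by positivity)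

lemma digS_add_inv_le_one {r : ℝ} (hr : 1 < r) {j : ℕ → ℕ} {N : ℕ}
    (hd : ∀ h, h < N → (j (h+1) : ℝ) ≤ r - 1) : digS r j N + (r^N)⁻¹ ≤ 1 := by
  induction N with
  | zero => simp [digS]
  | succ N ih =>
    have hr0 : (0:ℝ) < r := by linarith
    have hih := ih (fun h hh => hd h (by omega))
    have hsucc : digS r j (N+1) = digS r j N + (j (N+1) : ℝ) / r^(N+1) :=
      Finset.sum_range_succ _ _
    have hkey : (j (N+1) : ℝ) / r^(N+1) + (r^(N+1))⁻¹ ≤ (r^N)⁻¹ := by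
      have e1 : (j (N+1):ℝ)/r^(N+1) + (r^(N+1))⁻¹ = ((j (N+1):ℝ) + 1)/r^(N+1) := by
        rw [inv_eq_one_div, ← add_div]
      have h1 : ((j (N+1) : ℝ) + 1) / r^(N+1) ≤ r / r^(N+1) := by
        gcongr
        have := hd N (by omega); linarith
      have h2 : r / r^(N+1) = (r^N)⁻¹ := by
        rw [pow_succ]; field_simp
      rw [e1, ← h2]; exact h1
    rw [hsucc]
    linarith

lemma digS_shift {r : ℝ} (hr : 0 < r) (j : ℕ → ℕ) (N : ℕ) :
    r * digS r j (N+1) - (j 1 : ℝ) = digS r (fun h => j (h+1)) N := by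
  have h1 : digS r j (N+1) = (∑ h ∈ Finset.range N, (j (h+2) : ℝ) / r^(h+2)) + (j 1 : ℝ) / r := by
    rw [digS, Finset.sum_range_succ' (fun h => (j (h+1) : ℝ) / r^(h+1)) N]
    norm_num
  have h3 : r * ((j 1 : ℝ)/r) = (j 1 : ℝ) := by field_simp
  have h2 : ∀ h ∈ Finset.range N, r * ((j (h+2) : ℝ) / r^(h+2)) = (j (h+1+1) : ℝ) / r^(h+1) := by
    intro h _
    rw [pow_succ]
    field_simp
  rw [h1, mul_add, h3, Finset.mul_sum, add_sub_cancel_right, digS, Finset.sum_congr rfl h2]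

lemma colA {n m : ℕ} (hm : 2 ≤ m) (hmn : m ≤ n) {G : Finset (ℕ × ℕ)}
    (hGsub : ∀ e ∈ G, e.1 < n ∧ e.2 < m)
    {p : ℕ × ℕ → ℝ} (hp : ∀ e ∈ G, 0 < p e) (hp1 : ∑ e ∈ G, p e = 1)
    {q : ℕ → ℝ} (hq : ∀ j, q j = ∑ e ∈ G.filter (fun e => e.2 = j), p e)
    {μ : Measure E2} (hprob : IsProbabilityMeasure μ)
    (hμ : μ = ∑ e ∈ G, ENNReal.ofReal (p e) • μ.map (fAff n m e))
    (N : ℕ) :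
    ∀ (j : ℕ → ℕ), (∀ h, h < N → j (h+1) ∈ G.image Prod.snd) →
      μ (Rect 0 1 (digS m j N) (digS m j N + ((m:ℝ)^N)⁻¹))
        = ENNReal.ofReal (∏ h ∈ Finset.range N, q (j (h+1))) := by
  have hm' : (2:ℝ) ≤ m := by exact_mod_cast hm
  have hm0 : (0:ℝ) < m := by linarith
  have hQ1 : μ Qset = 1 := measure_Q_one hm hmn hGsub hp hp1 hprob hμ
  have hqnn : ∀ a, 0 ≤ q a := fun a => by
    rw [hq a]; exact Finset.sum_nonneg fun e he => (hp e (Finset.mem_filter.mp he).1).le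
  induction N with
  | zero =>
    intro j hj
    simp only [digS, Finset.range_zero, Finset.sum_empty, Finset.prod_empty, pow_zero, inv_one,
      zero_add, ENNReal.ofReal_one]
    exact hQ1
  | succ N ih =>
    intro j hj
    obtain ⟨e₁, he₁, he₁2⟩ : ∃ e ∈ G, e.2 = j 1 := by
      have := hj 0 (by omega)
      simpa [Finset.mem_image] using this
    set b := digS m j (N+1) with hbdef
    set j' : ℕ → ℕ := fun h => j (h+1) with hj'def
    set b' := digS m j' N with hb'def
    have hdig : ∀ h, h < N + 1 → (j (h+1) : ℝ) ≤ (m:ℝ) - 1 := by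
      intro h hh
      obtain ⟨e', he', he'2⟩ : ∃ e ∈ G, e.2 = j (h+1) := by
        simpa [Finset.mem_image] using hj h hh
      have : j (h+1) + 1 ≤ m := by rw [← he'2]; exact (hGsub e' he').2
      have : (j (h+1) : ℝ) + 1 ≤ m := by exact_mod_cast this
      linarith
    have hshift : (m:ℝ) * b - (j 1 : ℝ) = b' := digS_shift hm0 j N
    have hb'0 : (0:ℝ) ≤ b' := digS_nonneg hm0 j' N
    have hb'1 : b' + ((m:ℝ)^N)⁻¹ ≤ 1 :=
      digS_add_inv_le_one (by linarith) (fun h hh => hdig (h+1) (by omega))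
    have hwidth : (m:ℝ) * (((m:ℝ)^(N+1))⁻¹) = ((m:ℝ)^N)⁻¹ := by
      rw [pow_succ]
      field_simp
    rw [measure_apply_sum hμ measurableSet_rect]
    have hterm : ∀ e ∈ G,
        ENNReal.ofReal (p e) * μ (fAff n m e ⁻¹' Rect 0 1 b (b + ((m:ℝ)^(N+1))⁻¹))
        = (if e.2 = j 1 then
            ENNReal.ofReal (p e) * ENNReal.ofReal (∏ h ∈ Finset.range N, q (j' (h+1)))
          else 0) := by
      intro e he
      rw [fAff_preimage_rect (by omega) (by omega)]
      have he1n : (e.1:ℝ) + 1 ≤ n := by exact_mod_cast Nat.succ_le_of_lt (hGsub e he).1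
      have he10 : (0:ℝ) ≤ e.1 := Nat.cast_nonneg _
      by_cases hcase : e.2 = j 1
      · rw [if_pos hcase]
        congr 1
        have hc : (m:ℝ) * b - (e.2:ℝ) = b' := by rw [hcase]; exact hshift
        have hd : (m:ℝ) * (b + ((m:ℝ)^(N+1))⁻¹) - (e.2:ℝ) = b' + ((m:ℝ)^N)⁻¹ := by
          rw [mul_add, hwidth]; linarith
        have h0 : (n:ℝ) * 0 - (e.1:ℝ) = -(e.1:ℝ) := by ring
        have h1 : (n:ℝ) * 1 - (e.1:ℝ) = (n:ℝ) - e.1 := by ring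
        rw [h0, h1, hc, hd]
        have hseteq : Rect (-(e.1:ℝ)) ((n:ℝ)-e.1) b' (b'+((m:ℝ)^N)⁻¹) ∩ Qset
            = Rect 0 1 b' (b'+((m:ℝ)^N)⁻¹) ∩ Qset := by
          ext x
          simp only [mem_inter_iff, mem_rect, Qset]
          constructor <;> rintro ⟨⟨⟨a1,a2⟩,a3,a4⟩,⟨c1,c2⟩,c3,c4⟩ <;>
            exact ⟨⟨⟨by linarith, by linarith⟩, a3, a4⟩, ⟨c1, c2⟩, c3, c4⟩
        rw [measure_inter_Q hQ1 hprob measurableSet_rect, hseteq,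
          ← measure_inter_Q hQ1 hprob measurableSet_rect]
        exact ih j' (fun h hh => hj (h+1) (by omega))
      · rw [if_neg hcase]
        refine mul_eq_zero_of_right _ ?_
        rw [measure_inter_Q hQ1 hprob measurableSet_rect]
        have hwit0 : ∃ e₀ ∈ G, e₀.2 ≠ 0 := by
          by_cases hz : j 1 = 0
          · exact ⟨e, he, by rw [hz] at hcase; exact hcase⟩
          · exact ⟨e₁, he₁, by rw [he₁2]; exact hz⟩
        have hwit1 : ∃ e₀ ∈ G, e₀.2 ≠ m - 1 := by
          by_cases hz : j 1 = m - 1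
          · exact ⟨e, he, by rw [hz] at hcase; exact hcase⟩
          · exact ⟨e₁, he₁, by rw [he₁2]; exact hz⟩
        have hsub : Rect ((n:ℝ)*0 - e.1) ((n:ℝ)*1 - e.1) ((m:ℝ)*b - e.2)
            ((m:ℝ)*(b+((m:ℝ)^(N+1))⁻¹) - e.2) ∩ Qset
            ⊆ {x : E2 | x 1 = (0:ℝ)} ∪ {x : E2 | x 1 = (1:ℝ)} := by
          rintro x ⟨⟨⟨a1,a2⟩,a3,a4⟩,⟨c1,c2⟩,c3,c4⟩
          have hd : (m:ℝ)*(b+((m:ℝ)^(N+1))⁻¹) - e.2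
              = ((j 1:ℝ) - e.2) + b' + ((m:ℝ)^N)⁻¹ := by
            rw [mul_add, hwidth]; linarith
          have hc : (m:ℝ)*b - (e.2:ℝ) = ((j 1:ℝ) - e.2) + b' := by linarith
          rw [hc] at a3
          rw [hd] at a4
          rcases Nat.lt_or_ge e.2 (j 1) with hlt | hge
          · right
            have : (e.2:ℝ) + 1 ≤ (j 1 : ℝ) := by exact_mod_cast Nat.succ_le_of_lt hlt
            have : x 1 = 1 := le_antisymm c4 (by linarith)
            exact this
          · left
            have hlt : e.2 > j 1 := by omega
            have : (j 1:ℝ) + 1 ≤ (e.2 : ℝ) := by exact_mod_cast Nat.succ_le_of_lt hlt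
            have : x 1 = 0 := le_antisymm (by linarith) c3
            exact this
        refine le_antisymm ((measure_mono hsub).trans ?_) zero_le
        calc μ ({x : E2 | x 1 = (0:ℝ)} ∪ {x : E2 | x 1 = (1:ℝ)})
            ≤ μ {x : E2 | x 1 = (0:ℝ)} + μ {x : E2 | x 1 = (1:ℝ)} := measure_union_le _ _
          _ = 0 := by
              rw [measure_line_zero hm hmn hGsub hp hp1 hprob hμ hwit0,
                measure_line_one hm hmn hGsub hp hp1 hprob hμ hwit1, add_zero]
    rw [Finset.sum_congr rfl hterm, ← Finset.sum_filter, ← Finset.sum_mul]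
    have hcoef : ∑ e ∈ G.filter (fun e => e.2 = j 1), ENNReal.ofReal (p e)
        = ENNReal.ofReal (q (j 1)) := by
      rw [hq, ENNReal.ofReal_sum_of_nonneg (fun e he => (hp e (Finset.mem_filter.mp he).1).le)]
    rw [hcoef, ← ENNReal.ofReal_mul (hqnn _)]
    congr 1
    rw [Finset.prod_range_succ' (fun h => q (j (h+1))) N]
    ring
lemma sqB {n m : ℕ} (hm : 2 ≤ m) (hmn : m ≤ n) {G : Finset (ℕ × ℕ)}
    (hGsub : ∀ e ∈ G, e.1 < n ∧ e.2 < m)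
    (hsep : ∀ e ∈ G, ∀ e' ∈ G, e ≠ e' →
      2 ≤ max ((e.1 : ℤ) - e'.1).natAbs ((e.2 : ℤ) - e'.2).natAbs)
    {p : ℕ × ℕ → ℝ} (hp : ∀ e ∈ G, 0 < p e) (hp1 : ∑ e ∈ G, p e = 1)
    {q : ℕ → ℝ} (hq : ∀ j, q j = ∑ e ∈ G.filter (fun e => e.2 = j), p e)
    {μ : Measure E2} (hprob : IsProbabilityMeasure μ)
    (hμ : μ = ∑ e ∈ G, ENNReal.ofReal (p e) • μ.map (fAff n m e))
    (L N : ℕ) :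
    ∀ (i j : ℕ → ℕ), (∀ h, h < L → (i (h+1), j (h+1)) ∈ G) →
      (∀ h, L ≤ h → h < L + N → j (h+1) ∈ G.image Prod.snd) →
      μ (Rect (digS n i L) (digS n i L + ((n:ℝ)^L)⁻¹)
          (digS m j (L+N)) (digS m j (L+N) + ((m:ℝ)^(L+N))⁻¹))
        = ENNReal.ofReal ((∏ h ∈ Finset.range L, p (i (h+1), j (h+1)))
            * ∏ h ∈ Finset.range N, q (j (L+h+1))) := by
  have hm' : (2:ℝ) ≤ m := by exact_mod_cast hm
  have hn' : (m:ℝ) ≤ n := by exact_mod_cast hmn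
  have hm0 : (0:ℝ) < m := by linarith
  have hn0 : (0:ℝ) < n := by linarith
  have hQ1 : μ Qset = 1 := measure_Q_one hm hmn hGsub hp hp1 hprob hμ
  have hqnn : ∀ a, 0 ≤ q a := fun a => by
    rw [hq a]; exact Finset.sum_nonneg fun e he => (hp e (Finset.mem_filter.mp he).1).le
  induction L with
  | zero =>
    intro i j hijG hjy
    simp only [digS, Finset.range_zero, Finset.sum_empty, pow_zero, inv_one,
      Finset.prod_empty, one_mul, Nat.zero_add, zero_add]
    exact colA hm hmn hGsub hp hp1 hq hprob hμ N j
      (fun h hh => hjy h (by omega) (by omega))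
  | succ L ih =>
    intro i j hijG hjy
    have he₀ : (i 1, j 1) ∈ G := hijG 0 (by omega)
    have hLN : L + 1 + N = (L + N) + 1 := by omega
    set i' : ℕ → ℕ := fun h => i (h+1) with hi'def
    set j' : ℕ → ℕ := fun h => j (h+1) with hj'def
    set A := digS n i (L+1) with hAdef
    set A' := digS n i' L with hA'def
    set b := digS m j (L+1+N) with hbdef
    set b' := digS m j' (L+N) with hb'def
    have hshiftA : (n:ℝ) * A - (i 1 : ℝ) = A' := digS_shift hn0 i L
    have hshiftB : (m:ℝ) * b - (j 1 : ℝ) = b' := by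
      rw [hbdef, hb'def, hLN]
      exact digS_shift hm0 j (L+N)
    have hdigi : ∀ h, h < L + 1 → (i (h+1) : ℝ) ≤ (n:ℝ) - 1 := by
      intro h hh
      have : i (h+1) + 1 ≤ n := (hGsub _ (hijG h hh)).1
      have : (i (h+1) : ℝ) + 1 ≤ n := by exact_mod_cast this
      linarith
    have hdigj : ∀ h, h < L + 1 + N → (j (h+1) : ℝ) ≤ (m:ℝ) - 1 := by
      intro h hh
      have hjm : j (h+1) < m := by
        by_cases hc : h < L + 1
        · exact (hGsub _ (hijG h hc)).2
        · obtain ⟨e', he', he'2⟩ : ∃ e ∈ G, e.2 = j (h+1) := by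
            simpa [Finset.mem_image] using hjy h (by omega) (by omega)
          rw [← he'2]; exact (hGsub e' he').2
      have : (j (h+1) : ℝ) + 1 ≤ m := by exact_mod_cast Nat.succ_le_of_lt hjm
      linarith
    have hA'0 : (0:ℝ) ≤ A' := digS_nonneg hn0 i' L
    have hA'1 : A' + ((n:ℝ)^L)⁻¹ ≤ 1 :=
      digS_add_inv_le_one (by linarith) (fun h hh => hdigi (h+1) (by omega))
    have hb'0 : (0:ℝ) ≤ b' := digS_nonneg hm0 j' (L+N)
    have hb'1 : b' + ((m:ℝ)^(L+N))⁻¹ ≤ 1 :=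
      digS_add_inv_le_one (by linarith) (fun h hh => hdigj (h+1) (by omega))
    have hwidthn : (n:ℝ) * (((n:ℝ)^(L+1))⁻¹) = ((n:ℝ)^L)⁻¹ := by
      rw [pow_succ]; field_simp
    have hwidthm : (m:ℝ) * (((m:ℝ)^(L+1+N))⁻¹) = ((m:ℝ)^(L+N))⁻¹ := by
      rw [hLN, pow_succ]; field_simp
    rw [measure_apply_sum hμ measurableSet_rect]
    rw [Finset.sum_eq_single_of_mem (i 1, j 1) he₀ ?wrong]
    case wrong =>
      intro e he hne
      refine mul_eq_zero_of_right _ ?_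
      rw [fAff_preimage_rect (by omega) (by omega),
        measure_inter_Q hQ1 hprob measurableSet_rect]
      have hempty : Rect ((n:ℝ)*A - e.1) ((n:ℝ)*(A+((n:ℝ)^(L+1))⁻¹) - e.1)
          ((m:ℝ)*b - e.2) ((m:ℝ)*(b+((m:ℝ)^(L+1+N))⁻¹) - e.2) ∩ Qset = (∅ : Set E2) := by
        ext x
        simp only [mem_inter_iff, mem_rect, Qset, mem_empty_iff_false, iff_false]
        rintro ⟨⟨⟨a1,a2⟩,a3,a4⟩,⟨c1,c2⟩,c3,c4⟩
        have ha2' : x 0 ≤ ((i 1:ℝ) - e.1) + A' + ((n:ℝ)^L)⁻¹ := by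
          rw [mul_add, hwidthn] at a2; linarith
        have ha1' : ((i 1:ℝ) - e.1) + A' ≤ x 0 := by linarith
        have hc2' : x 1 ≤ ((j 1:ℝ) - e.2) + b' + ((m:ℝ)^(L+N))⁻¹ := by
          rw [mul_add, hwidthm] at a4; linarith
        have hc1' : ((j 1:ℝ) - e.2) + b' ≤ x 1 := by linarith
        have hsep' := hsep e he (i 1, j 1) he₀ hne
        rw [le_max_iff] at hsep'
        rcases hsep' with hs | hs
        · have hsZ : (2:ℤ) ≤ |(e.1:ℤ) - (i 1 : ℤ)| := by
            rw [Int.abs_eq_natAbs]; exact_mod_cast hs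
          have hsR : (2:ℝ) ≤ |(e.1:ℝ) - (i 1 : ℝ)| := by exact_mod_cast hsZ
          rcases abs_cases ((e.1:ℝ) - (i 1 : ℝ)) with ⟨habs, _⟩ | ⟨habs, _⟩ <;>
            rw [habs] at hsR <;> linarith
        · have hsZ : (2:ℤ) ≤ |(e.2:ℤ) - (j 1 : ℤ)| := by
            rw [Int.abs_eq_natAbs]; exact_mod_cast hs
          have hsR : (2:ℝ) ≤ |(e.2:ℝ) - (j 1 : ℝ)| := by exact_mod_cast hsZ
          rcases abs_cases ((e.2:ℝ) - (j 1 : ℝ)) with ⟨habs, _⟩ | ⟨habs, _⟩ <;>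
            rw [habs] at hsR <;> linarith
      rw [hempty]
      exact measure_empty
    · -- main term
      rw [fAff_preimage_rect (by omega) (by omega)]
      have hc : (m:ℝ) * b - ((i 1, j 1).2:ℝ) = b' := hshiftB
      have hd : (m:ℝ) * (b + ((m:ℝ)^(L+1+N))⁻¹) - ((i 1, j 1).2:ℝ)
          = b' + ((m:ℝ)^(L+N))⁻¹ := by
        rw [mul_add, hwidthm]; linarith
      have ha : (n:ℝ) * A - ((i 1, j 1).1:ℝ) = A' := hshiftA
      have hb2 : (n:ℝ) * (A + ((n:ℝ)^(L+1))⁻¹) - ((i 1, j 1).1:ℝ)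
          = A' + ((n:ℝ)^L)⁻¹ := by
        rw [mul_add, hwidthn]; linarith
      rw [ha, hb2, hc, hd]
      rw [ih i' j' (fun h hh => hijG (h+1) (by omega))
        (fun h h1 h2 => hjy (h+1) (by omega) (by omega))]
      have hXnn : (0:ℝ) ≤ ∏ h ∈ Finset.range L, p (i' (h+1), j' (h+1)) :=
        Finset.prod_nonneg fun h hh =>
          (hp _ (hijG (h+1) (by have := Finset.mem_range.mp hh; omega))).le
      have hYnn : (0:ℝ) ≤ ∏ h ∈ Finset.range N, q (j' (L+h+1)) :=
        Finset.prod_nonneg fun h _ => hqnn _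
      rw [← ENNReal.ofReal_mul (hp _ he₀).le]
      congr 1
      rw [Finset.prod_range_succ' (fun h => p (i (h+1), j (h+1))) L]
      have hprodq : ∏ h ∈ Finset.range N, q (j' (L+h+1))
          = ∏ h ∈ Finset.range N, q (j (L+1+h+1)) := by
        refine Finset.prod_congr rfl fun h _ => ?_
        show q (j (L+h+1+1)) = q (j (L+1+h+1))
        rw [show L+h+1+1 = L+1+h+1 from by omega]
      rw [← hprodq]
      ring
end Stmt1Aux

open Stmt1Aux in
theorem statement1
    (n m : ℕ) (hm : 2 ≤ m) (hmn : m ≤ n)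
    (G : Finset (ℕ × ℕ)) (hGsub : ∀ e ∈ G, e.1 < n ∧ e.2 < m) (hGcard : 2 ≤ G.card)
    (hsep : ∀ e ∈ G, ∀ e' ∈ G, e ≠ e' →
      2 ≤ max ((e.1 : ℤ) - e'.1).natAbs ((e.2 : ℤ) - e'.2).natAbs)
    (p : ℕ × ℕ → ℝ) (hp : ∀ e ∈ G, 0 < p e) (hp1 : ∑ e ∈ G, p e = 1)
    (q : ℕ → ℝ) (hq : ∀ j, q j = ∑ e ∈ G.filter (fun e => e.2 = j), p e)
    (μ : Measure (EuclideanSpace ℝ (Fin 2))) (hprob : IsProbabilityMeasure μ)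
    (hμ : μ = ∑ e ∈ G, ENNReal.ofReal (p e) • μ.map (fAff n m e))
    (k : ℕ) (hk : 1 ≤ k)
    (L : ℕ) (hL : L = ⌊(k : ℝ) * (Real.log m / Real.log n)⌋₊)
    (i j : ℕ → ℕ) (hij : ∀ h ∈ Finset.Icc 1 L, (i h, j h) ∈ G)
    (hjy : ∀ h ∈ Finset.Icc (L + 1) k, j h ∈ G.image Prod.snd)
    (F : Set (EuclideanSpace ℝ (Fin 2)))
    (hF : F = {x : EuclideanSpace ℝ (Fin 2) |
      x 0 ∈ Set.Icc (∑ h ∈ Finset.Icc 1 L, (i h : ℝ) / (n : ℝ) ^ h)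
        ((∑ h ∈ Finset.Icc 1 L, (i h : ℝ) / (n : ℝ) ^ h) + ((n : ℝ) ^ L)⁻¹) ∧
      x 1 ∈ Set.Icc (∑ h ∈ Finset.Icc 1 k, (j h : ℝ) / (m : ℝ) ^ h)
        ((∑ h ∈ Finset.Icc 1 k, (j h : ℝ) / (m : ℝ) ^ h) + ((m : ℝ) ^ k)⁻¹)}) :
    μ F = ENNReal.ofReal ((∏ h ∈ Finset.Icc 1 L, p (i h, j h)) *
      ∏ h ∈ Finset.Icc (L + 1) k, q (j h)) := by
  -- L ≤ k
  have hm2 : (2:ℝ) ≤ m := by exact_mod_cast hm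
  have hn2 : (2:ℝ) ≤ n := by
    have : (m:ℝ) ≤ n := by exact_mod_cast hmn
    linarith
  have hLk : L ≤ k := by
    rw [hL]
    have hlogn : 0 < Real.log n := Real.log_pos (by linarith)
    have hθ : Real.log m / Real.log n ≤ 1 := by
      rw [div_le_one hlogn]
      exact Real.log_le_log (by linarith) (by exact_mod_cast hmn)
    have : (k:ℝ) * (Real.log m / Real.log n) ≤ (k:ℝ) :=
      mul_le_of_le_one_right (Nat.cast_nonneg _) hθ
    calc ⌊(k : ℝ) * (Real.log m / Real.log n)⌋₊ ≤ ⌊(k:ℝ)⌋₊ := Nat.floor_le_floor this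
      _ = k := Nat.floor_natCast k
  set k' := k - L with hk'def
  have hksplit : L + k' = k := by omega
  -- endpoint conversions
  have hA : (∑ h ∈ Finset.Icc 1 L, (i h : ℝ) / (n : ℝ) ^ h) = digS n i L := by
    rw [← Finset.Ico_add_one_right_eq_Icc, Finset.sum_Ico_eq_sum_range, digS]
    refine Finset.sum_congr (by norm_num) fun h _ => ?_
    rw [Nat.add_comm 1 h]
  have hB : (∑ h ∈ Finset.Icc 1 k, (j h : ℝ) / (m : ℝ) ^ h) = digS m j k := by
    rw [← Finset.Ico_add_one_right_eq_Icc, Finset.sum_Ico_eq_sum_range, digS]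
    refine Finset.sum_congr (by norm_num) fun h _ => ?_
    rw [Nat.add_comm 1 h]
  have hF0 : F = Rect (∑ h ∈ Finset.Icc 1 L, (i h : ℝ) / (n : ℝ) ^ h)
      ((∑ h ∈ Finset.Icc 1 L, (i h : ℝ) / (n : ℝ) ^ h) + ((n : ℝ) ^ L)⁻¹)
      (∑ h ∈ Finset.Icc 1 k, (j h : ℝ) / (m : ℝ) ^ h)
      ((∑ h ∈ Finset.Icc 1 k, (j h : ℝ) / (m : ℝ) ^ h) + ((m : ℝ) ^ k)⁻¹) := hF
  rw [hA, hB] at hF0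
  -- product conversions
  have hP : (∏ h ∈ Finset.Icc 1 L, p (i h, j h))
      = ∏ h ∈ Finset.range L, p (i (h+1), j (h+1)) := by
    rw [← Finset.Ico_add_one_right_eq_Icc, Finset.prod_Ico_eq_prod_range]
    refine Finset.prod_congr (by norm_num) fun h _ => ?_
    rw [Nat.add_comm 1 h]
  have hQ : (∏ h ∈ Finset.Icc (L+1) k, q (j h))
      = ∏ h ∈ Finset.range k', q (j (L+h+1)) := by
    rw [← Finset.Ico_add_one_right_eq_Icc, Finset.prod_Ico_eq_prod_range]
    refine Finset.prod_congr (by congr 1; omega) fun h _ => ?_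
    rw [show L+1+h = L+h+1 from by omega]
  rw [hF0, hP, hQ]
  have hmain := sqB hm hmn hGsub hsep hp hp1 hq hprob hμ L k' i j
    (fun h hh => hij (h+1) (Finset.mem_Icc.mpr ⟨by omega, by omega⟩))
    (fun h h1 h2 => hjy (h+1) (Finset.mem_Icc.mpr ⟨by omega, by omega⟩))
  rw [hksplit] at hmain
  exact hmain
end

section
/- Let Γ be a finite maximal antichain in Φ* (i.e., a finite set of pairwise incomparable words σ = ω×ρ with |ω| = ⌊|σ|ϑ⌋ whose cylinders cover W). Define ζ(σ) = λ([σ])(log λ([σ]) − U_{|σ|}). Then Σ_{σ∈Γ} λ([σ]) log λ([σ]) = Σ_{σ∈Γ} λ([σ]) U_{|σ|}, i.e., Σ_{σ∈Γ} ζ(σ) = 0. -/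
open Real Set

/-- A finite coding word `ω × ρ` with `ω ∈ G*` and `ρ ∈ G_y*`. -/
abbrev Word : Type := List (ℕ × ℕ) × List ℕ

/-- A point of the product coding space `W = G^ℕ × G_y^ℕ`. -/
abbrev CodeSeq : Type := (ℕ → ℕ × ℕ) × (ℕ → ℕ)

/-- Total length `|ω × ρ| = |ω| + |ρ|`. -/
def wlen (σ : Word) : ℕ := σ.1.length + σ.2.length

/-- The cylinder measure `λ([ω × ρ]) = p_ω q_ρ`. -/
noncomputable def wt (p : ℕ × ℕ → ℝ) (q : ℕ → ℝ) (σ : Word) : ℝ :=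
  (σ.1.map p).prod * (σ.2.map q).prod

/-- The cylinder set `[ω × ρ] ⊆ W`. -/
def Cyl (σ : Word) : Set CodeSeq :=
  {τ | (∀ h : ℕ, ∀ hh : h < σ.1.length, τ.1 h = σ.1.get ⟨h, hh⟩) ∧
       (∀ h : ℕ, ∀ hh : h < σ.2.length, τ.2 h = σ.2.get ⟨h, hh⟩)}

/-- The product coding space `W = G^ℕ × G_y^ℕ` inside `Seq`. -/
def WSeq (G : Finset (ℕ × ℕ)) : Set CodeSeq :=
  {τ | (∀ h, τ.1 h ∈ G) ∧ ∀ h, τ.2 h ∈ G.image Prod.snd}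

/-- The partial order on coding words: `σ ≺ τ` iff both components are prefixes. -/
def Prec (σ τ : Word) : Prop := σ.1 <+: τ.1 ∧ σ.2 <+: τ.2

/-- Membership in `Φ*`: letters admissible and `|ω| = ⌊|σ| ϑ⌋` where `L k = ⌊k ϑ⌋`. -/
def InPhi (G : Finset (ℕ × ℕ)) (L : ℕ → ℕ) (σ : Word) : Prop :=
  σ.1.length = L (wlen σ) ∧ (∀ e ∈ σ.1, e ∈ G) ∧ ∀ j ∈ σ.2, j ∈ G.image Prod.snd

section ListAux
variable {α : Type*} [DecidableEq α]

def listsLen (s : Finset α) : ℕ → Finset (List α)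
  | 0 => {[]}
  | n+1 => ((s ×ˢ listsLen s n).image fun x => x.1 :: x.2)

lemma mem_listsLen (s : Finset α) :
    ∀ (n : ℕ) (l : List α), l ∈ listsLen s n ↔ l.length = n ∧ ∀ a ∈ l, a ∈ s
  | 0, l => by
    constructor
    · intro h
      simp only [listsLen, Finset.mem_singleton] at h
      subst h; simp
    · rintro ⟨h1, _⟩
      rw [List.length_eq_zero_iff] at h1; subst h1; simp [listsLen]
  | n+1, l => by
    cases l with
    | nil => simp [listsLen]
    | cons a t =>
      simp only [listsLen, Finset.mem_image, Finset.mem_product, Prod.exists]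
      constructor
      · rintro ⟨b, u, ⟨hb, hu⟩, heq⟩
        obtain ⟨rfl, rfl⟩ : b = a ∧ u = t := by
          simpa using heq
        obtain ⟨h1, h2⟩ := (mem_listsLen s n u).1 hu
        refine ⟨by simp [h1], ?_⟩
        intro x hx
        rcases List.mem_cons.1 hx with rfl | hx
        · exact hb
        · exact h2 x hx
      · rintro ⟨h1, h2⟩
        refine ⟨a, t, ⟨h2 a (by simp), (mem_listsLen s n t).2 ⟨by simpa using h1, fun x hx => h2 x (by simp [hx])⟩⟩, rfl⟩
end ListAux

lemma prefix_snoc {α : Type*} {l₁ l₂ : List α} (d : α) (h : l₁ <+: l₂)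
    (hlt : l₁.length < l₂.length) : l₁ ++ [l₂.getD l₁.length d] <+: l₂ := by
  obtain ⟨t, rfl⟩ := h
  cases t with
  | nil => simp at hlt
  | cons b u =>
    have : (l₁ ++ b :: u).getD l₁.length d = b := by
      rw [List.getD_eq_getElem _ _ (by simpa using hlt),
        List.getElem_append_right (le_refl _)]
      simp
    rw [this]
    exact ⟨u, by simp⟩

lemma prefix_of_getElem {α : Type*} {l₁ l₂ : List α}
    (hle : l₁.length ≤ l₂.length)
    (hget : ∀ i (h1 : i < l₁.length) (h2 : i < l₂.length), l₁[i] = l₂[i]) : l₁ <+: l₂ := by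
  rw [List.prefix_iff_eq_take]
  apply List.ext_getElem
  · simp [Nat.min_eq_left hle]
  · intro i h1 h2
    rw [List.getElem_take]
    exact hget i h1 (lt_of_lt_of_le h1 hle)

section LFacts
variable (L : ℕ → ℕ)

lemma L_step (n m : ℕ) (hm : 2 ≤ m) (hmn : m ≤ n)
    (hL : ∀ k, L k = ⌊(k : ℝ) * (Real.log m / Real.log n)⌋₊) :
    L 0 = 0 ∧ ∀ k, L (k+1) = L k ∨ L (k+1) = L k + 1 := by
  set θ : ℝ := Real.log m / Real.log n with hθ
  have hn1 : (1:ℝ) < n := by exact_mod_cast (by omega : 1 < n)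
  have hm1 : (1:ℝ) ≤ m := by exact_mod_cast (by omega : 1 ≤ m)
  have hθ0 : 0 ≤ θ := div_nonneg (Real.log_nonneg hm1) (Real.log_pos hn1).le
  have hθ1 : θ ≤ 1 := by
    rw [div_le_one (Real.log_pos hn1)]
    exact Real.log_le_log (by linarith) (by exact_mod_cast hmn)
  constructor
  · rw [hL 0]; simp
  · intro k
    have hlow : L k ≤ L (k+1) := by
      rw [hL k, hL (k+1)]
      exact Nat.floor_mono (mul_le_mul_of_nonneg_right (by push_cast; linarith) hθ0)
    have hhigh : L (k+1) ≤ L k + 1 := by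
      rw [hL k, hL (k+1)]
      have h1 : ((k+1 : ℕ) : ℝ) * θ ≤ (k:ℝ) * θ + 1 := by push_cast; nlinarith
      calc ⌊((k+1:ℕ):ℝ) * θ⌋₊ ≤ ⌊(k:ℝ) * θ + 1⌋₊ := Nat.floor_mono h1
        _ = ⌊(k:ℝ) * θ⌋₊ + 1 := Nat.floor_add_one (by positivity)
    omega

variable (hL0 : L 0 = 0) (hstep : ∀ k, L (k+1) = L k ∨ L (k+1) = L k + 1)

include hL0 hstep in
lemma L_le_self : ∀ k, L k ≤ k := by
  intro k
  induction k with
  | zero => omega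
  | succ k ih => rcases hstep k with h | h <;> omega

include hstep in
lemma L_mono : ∀ {a b : ℕ}, a ≤ b → L a ≤ L b := by
  intro a b hab
  induction b, hab using Nat.le_induction with
  | base => exact le_rfl
  | succ b hb ih => rcases hstep b with h | h <;> omega

include hL0 hstep in
lemma colen_mono : ∀ {a b : ℕ}, a ≤ b → a - L a ≤ b - L b := by
  intro a b hab
  induction b, hab using Nat.le_induction with
  | base => exact le_rfl
  | succ b hb ih =>
    have := L_le_self L hL0 hstep b
    rcases hstep b with h | h <;> omega

end LFacts

section QFacts
variable (G : Finset (ℕ × ℕ)) (p : ℕ × ℕ → ℝ) (q : ℕ → ℝ)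
  (hp : ∀ e ∈ G, 0 < p e) (hp1 : ∑ e ∈ G, p e = 1)
  (hq : ∀ j, q j = ∑ e ∈ G.filter (fun e => e.2 = j), p e)

include hq hp1 in
lemma q_sum_one : ∑ j ∈ G.image Prod.snd, q j = 1 := by
  rw [← hp1, ← Finset.sum_fiberwise_of_maps_to (fun e he => Finset.mem_image_of_mem Prod.snd he) p]
  exact Finset.sum_congr rfl fun j _ => hq j

include hq hp in
lemma q_pos : ∀ j ∈ G.image Prod.snd, 0 < q j := by
  intro j hj
  obtain ⟨e, he, rfl⟩ := Finset.mem_image.1 hj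
  rw [hq]
  apply Finset.sum_pos
  · intro x hx
    exact hp x (Finset.mem_filter.1 hx).1
  · exact ⟨e, Finset.mem_filter.2 ⟨he, rfl⟩⟩

end QFacts

section Main
open Finset
open scoped Classical

variable (G : Finset (ℕ × ℕ)) (p : ℕ × ℕ → ℝ) (q : ℕ → ℝ) (L : ℕ → ℕ) (U : ℕ → ℝ)

noncomputable def zeta (σ : Word) : ℝ :=
  wt p q σ * Real.log (wt p q σ) - wt p q σ * U (wlen σ)

def PhiN (N : ℕ) : Finset Word :=
  (listsLen G (L N)) ×ˢ (listsLen (G.image Prod.snd) (N - L N))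

lemma mem_PhiN (N : ℕ) (τ : Word) :
    τ ∈ PhiN G L N ↔ (τ.1.length = L N ∧ ∀ e ∈ τ.1, e ∈ G) ∧
      (τ.2.length = N - L N ∧ ∀ j ∈ τ.2, j ∈ G.image Prod.snd) := by
  cases τ with
  | mk a b => simp [PhiN, Finset.mem_product, mem_listsLen]

lemma wt_pos (hp : ∀ e ∈ G, 0 < p e) (hqpos : ∀ j ∈ G.image Prod.snd, 0 < q j)
    (σ : Word) (h1 : ∀ e ∈ σ.1, e ∈ G) (h2 : ∀ j ∈ σ.2, j ∈ G.image Prod.snd) :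
    0 < wt p q σ := by
  unfold wt
  apply mul_pos
  · apply List.prod_pos
    intro x hx
    obtain ⟨e, he, rfl⟩ := List.mem_map.1 hx
    exact hp e (h1 e he)
  · apply List.prod_pos
    intro x hx
    obtain ⟨j, hj, rfl⟩ := List.mem_map.1 hx
    exact hqpos j (h2 j hj)

lemma wt_push_q (σ : Word) (j : ℕ) : wt p q (σ.1, σ.2 ++ [j]) = wt p q σ * q j := by
  simp [wt]; ring

lemma wt_push_p (σ : Word) (e : ℕ × ℕ) : wt p q (σ.1 ++ [e], σ.2) = wt p q σ * p e := by
  simp [wt]; ring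

lemma wlen_push_q (σ : Word) (j : ℕ) : wlen (σ.1, σ.2 ++ [j]) = wlen σ + 1 := by
  simp [wlen]; omega

lemma wlen_push_p (σ : Word) (e : ℕ × ℕ) : wlen (σ.1 ++ [e], σ.2) = wlen σ + 1 := by
  simp [wlen]; omega

lemma mart_q (hq1 : ∑ j ∈ G.image Prod.snd, q j = 1)
    (hqpos : ∀ j ∈ G.image Prod.snd, 0 < q j)
    (σ : Word) (hw : 0 < wt p q σ)
    (hUstep : U (wlen σ + 1) = U (wlen σ) +
      ∑ j ∈ G.image Prod.snd, q j * Real.log (q j)) :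
    ∑ j ∈ G.image Prod.snd, zeta p q U (σ.1, σ.2 ++ [j]) = zeta p q U σ := by
  set Sq := ∑ j ∈ G.image Prod.snd, q j * Real.log (q j) with hSq
  calc ∑ j ∈ G.image Prod.snd, zeta p q U (σ.1, σ.2 ++ [j])
      = ∑ j ∈ G.image Prod.snd,
        ((wt p q σ * (Real.log (wt p q σ) - U (wlen σ) - Sq)) * q j
          + wt p q σ * (q j * Real.log (q j))) := by
        refine Finset.sum_congr rfl fun j hj => ?_
        have hqj := hqpos j hj
        simp only [zeta]
        rw [wt_push_q, wlen_push_q, hUstep, Real.log_mul hw.ne' hqj.ne']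
        ring
    _ = (wt p q σ * (Real.log (wt p q σ) - U (wlen σ) - Sq)) *
          (∑ j ∈ G.image Prod.snd, q j) + wt p q σ * Sq := by
        rw [Finset.sum_add_distrib, ← Finset.mul_sum, ← Finset.mul_sum]
    _ = zeta p q U σ := by rw [hq1]; simp only [zeta]; ring

lemma mart_p (hp1 : ∑ e ∈ G, p e = 1)
    (hp : ∀ e ∈ G, 0 < p e)
    (σ : Word) (hw : 0 < wt p q σ)
    (hUstep : U (wlen σ + 1) = U (wlen σ) + ∑ e ∈ G, p e * Real.log (p e)) :
    ∑ e ∈ G, zeta p q U (σ.1 ++ [e], σ.2) = zeta p q U σ := by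
  set Sp := ∑ e ∈ G, p e * Real.log (p e) with hSp
  calc ∑ e ∈ G, zeta p q U (σ.1 ++ [e], σ.2)
      = ∑ e ∈ G,
        ((wt p q σ * (Real.log (wt p q σ) - U (wlen σ) - Sp)) * p e
          + wt p q σ * (p e * Real.log (p e))) := by
        refine Finset.sum_congr rfl fun e he => ?_
        have hpe := hp e he
        simp only [zeta]
        rw [wt_push_p, wlen_push_p, hUstep, Real.log_mul hw.ne' hpe.ne']
        ring
    _ = (wt p q σ * (Real.log (wt p q σ) - U (wlen σ) - Sp)) *
          (∑ e ∈ G, p e) + wt p q σ * Sp := by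
        rw [Finset.sum_add_distrib, ← Finset.mul_sum, ← Finset.mul_sum]
    _ = zeta p q U σ := by rw [hp1]; simp only [zeta]; ring

lemma levelSum (hp : ∀ e ∈ G, 0 < p e) (hp1 : ∑ e ∈ G, p e = 1)
    (hq : ∀ j, q j = ∑ e ∈ G.filter (fun e => e.2 = j), p e)
    (hL0 : L 0 = 0) (hstep : ∀ k, L (k+1) = L k ∨ L (k+1) = L k + 1)
    (hU : ∀ k, U k = (L k : ℝ) * ∑ e ∈ G, p e * Real.log (p e) +
      ((k : ℝ) - L k) * ∑ j ∈ G.image Prod.snd, q j * Real.log (q j)) :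
    ∀ (d : ℕ) (σ : Word), InPhi G L σ →
      ∑ τ ∈ (PhiN G L (wlen σ + d)).filter (fun τ => Prec σ τ), zeta p q U τ
        = zeta p q U σ := by
  have hqpos := q_pos G p q hp hq
  have hq1 := q_sum_one G p q hp1 hq
  intro d
  induction d with
  | zero =>
    intro σ hσ
    obtain ⟨hσ1, hσG, hσGy⟩ := hσ
    have hmem : σ ∈ PhiN G L (wlen σ + 0) := by
      rw [mem_PhiN]
      have h2 : σ.2.length = (wlen σ + 0) - L (wlen σ + 0) := by
        simp only [Nat.add_zero]
        unfold wlen at hσ1 ⊢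
        omega
      exact ⟨⟨by simpa using hσ1, hσG⟩, ⟨h2, hσGy⟩⟩
    have hfil : (PhiN G L (wlen σ + 0)).filter (fun τ => Prec σ τ) = {σ} := by
      apply Finset.eq_singleton_iff_unique_mem.2
      refine ⟨Finset.mem_filter.2 ⟨hmem, ⟨List.prefix_rfl, List.prefix_rfl⟩⟩, ?_⟩
      intro τ hτ
      obtain ⟨hτm, hpre⟩ := Finset.mem_filter.1 hτ
      obtain ⟨⟨hτ1, _⟩, ⟨hτ2, _⟩⟩ := (mem_PhiN G L _ τ).1 hτm
      obtain ⟨⟨hm1, _⟩, ⟨hm2, _⟩⟩ := (mem_PhiN G L _ σ).1 hmem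
      have e1 : τ.1 = σ.1 := (hpre.1.eq_of_length (by omega)).symm
      have e2 : τ.2 = σ.2 := (hpre.2.eq_of_length (by omega)).symm
      exact Prod.ext e1 e2
    rw [hfil, Finset.sum_singleton]
  | succ d ih =>
    intro σ hσ
    obtain ⟨hσ1, hσG, hσGy⟩ := hσ
    set k := wlen σ with hk
    set N := k + (d + 1) with hN
    have hσ2 : σ.2.length = k - L k := by
      have h := hk
      unfold wlen at h
      omega
    have hLk : L k ≤ k := L_le_self L hL0 hstep k
    have hw : 0 < wt p q σ := wt_pos G p q hp hqpos σ hσG hσGy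
    rcases hstep k with hA | hB
    · -- q-step : append a letter of Gy
      have hslt : σ.2.length < N - L N := by
        have h1 : (k+1) - L (k+1) ≤ N - L N := colen_mono L hL0 hstep (by omega)
        have h2 : L (k+1) ≤ k + 1 := L_le_self L hL0 hstep (k+1)
        omega
      have hkey : ∀ j ∈ G.image Prod.snd, InPhi G L (σ.1, σ.2 ++ [j]) := by
        intro j hj
        refine ⟨by rw [wlen_push_q]; simpa [← hk, hA] using hσ1, hσG, ?_⟩
        intro x hx
        rcases List.mem_append.1 hx with hx | hx
        · exact hσGy x hx
        · rw [List.mem_singleton] at hx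
          exact hx ▸ hj
      have hIH : ∀ j ∈ G.image Prod.snd,
          ∑ τ ∈ (PhiN G L N).filter (fun τ => Prec (σ.1, σ.2 ++ [j]) τ), zeta p q U τ
            = zeta p q U (σ.1, σ.2 ++ [j]) := by
        intro j hj
        have := ih (σ.1, σ.2 ++ [j]) (hkey j hj)
        rwa [wlen_push_q, show k + 1 + d = N by omega] at this
      have hmaps : ∀ τ ∈ (PhiN G L N).filter (fun τ => Prec σ τ),
          τ.2.getD σ.2.length 0 ∈ G.image Prod.snd := by
        intro τ hτ
        obtain ⟨hτm, _⟩ := Finset.mem_filter.1 hτ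
        obtain ⟨_, ⟨hτ2, hτGy⟩⟩ := (mem_PhiN G L _ τ).1 hτm
        have hlt : σ.2.length < τ.2.length := by omega
        rw [List.getD_eq_getElem _ _ hlt]
        exact hτGy _ (List.getElem_mem _)
      have hfib : ∀ j ∈ G.image Prod.snd,
          ((PhiN G L N).filter (fun τ => Prec σ τ)).filter
            (fun τ => τ.2.getD σ.2.length 0 = j)
          = (PhiN G L N).filter (fun τ => Prec (σ.1, σ.2 ++ [j]) τ) := by
        intro j hj
        ext τ
        simp only [Finset.mem_filter, and_assoc]
        constructor
        · rintro ⟨hτm, hpre, hg⟩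
          obtain ⟨_, ⟨hτ2, _⟩⟩ := (mem_PhiN G L _ τ).1 hτm
          have hlt : σ.2.length < τ.2.length := by omega
          refine ⟨hτm, hpre.1, ?_⟩
          have := prefix_snoc 0 hpre.2 hlt
          rwa [hg] at this
        · rintro ⟨hτm, h1, h2⟩
          have hpre2 : σ.2 <+: τ.2 := ((σ.2.prefix_append [j]).trans h2)
          have hlt : σ.2.length < τ.2.length := by
            have := h2.length_le
            simp at this; omega
          refine ⟨hτm, ⟨h1, hpre2⟩, ?_⟩
          rw [List.getD_eq_getElem _ _ hlt, ← h2.getElem (by simp)]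
          simp
      have hUstep : U (k + 1) = U k + ∑ j ∈ G.image Prod.snd, q j * Real.log (q j) := by
        rw [hU (k+1), hU k, hA]
        push_cast
        ring
      calc ∑ τ ∈ (PhiN G L N).filter (fun τ => Prec σ τ), zeta p q U τ
          = ∑ j ∈ G.image Prod.snd, ∑ τ ∈ ((PhiN G L N).filter (fun τ => Prec σ τ)).filter
              (fun τ => τ.2.getD σ.2.length 0 = j), zeta p q U τ :=
            (Finset.sum_fiberwise_of_maps_to hmaps _).symm
        _ = ∑ j ∈ G.image Prod.snd, zeta p q U (σ.1, σ.2 ++ [j]) := by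
            refine Finset.sum_congr rfl fun j hj => ?_
            rw [hfib j hj, hIH j hj]
        _ = zeta p q U σ := mart_q G p q U hq1 hqpos σ hw (by rw [← hk] at *; exact hUstep)
    · -- p-step : append a letter of G
      have hslt : σ.1.length < L N := by
        have h1 : L (k+1) ≤ L N := L_mono L hstep (by omega)
        omega
      have hkey : ∀ e ∈ G, InPhi G L (σ.1 ++ [e], σ.2) := by
        intro e he
        refine ⟨by rw [wlen_push_p]; simp [← hk, hB, ← hσ1], ?_, hσGy⟩
        intro x hx
        rcases List.mem_append.1 hx with hx | hx
        · exact hσG x hx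
        · rw [List.mem_singleton] at hx
          exact hx ▸ he
      have hIH : ∀ e ∈ G,
          ∑ τ ∈ (PhiN G L N).filter (fun τ => Prec (σ.1 ++ [e], σ.2) τ), zeta p q U τ
            = zeta p q U (σ.1 ++ [e], σ.2) := by
        intro e he
        have := ih (σ.1 ++ [e], σ.2) (hkey e he)
        rwa [wlen_push_p, show k + 1 + d = N by omega] at this
      have hmaps : ∀ τ ∈ (PhiN G L N).filter (fun τ => Prec σ τ),
          τ.1.getD σ.1.length (0,0) ∈ G := by
        intro τ hτ
        obtain ⟨hτm, _⟩ := Finset.mem_filter.1 hτ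
        obtain ⟨⟨hτ1, hτG⟩, _⟩ := (mem_PhiN G L _ τ).1 hτm
        have hlt : σ.1.length < τ.1.length := by omega
        rw [List.getD_eq_getElem _ _ hlt]
        exact hτG _ (List.getElem_mem _)
      have hfib : ∀ e ∈ G,
          ((PhiN G L N).filter (fun τ => Prec σ τ)).filter
            (fun τ => τ.1.getD σ.1.length (0,0) = e)
          = (PhiN G L N).filter (fun τ => Prec (σ.1 ++ [e], σ.2) τ) := by
        intro e he
        ext τ
        simp only [Finset.mem_filter, and_assoc]
        constructor
        · rintro ⟨hτm, hpre, hg⟩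
          obtain ⟨⟨hτ1, _⟩, _⟩ := (mem_PhiN G L _ τ).1 hτm
          have hlt : σ.1.length < τ.1.length := by omega
          refine ⟨hτm, ?_, hpre.2⟩
          have := prefix_snoc (0,0) hpre.1 hlt
          rwa [hg] at this
        · rintro ⟨hτm, h1, h2⟩
          have hpre1 : σ.1 <+: τ.1 := ((σ.1.prefix_append [e]).trans h1)
          have hlt : σ.1.length < τ.1.length := by
            have := h1.length_le
            simp at this; omega
          refine ⟨hτm, ⟨hpre1, h2⟩, ?_⟩
          rw [List.getD_eq_getElem _ _ hlt, ← h1.getElem (by simp)]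
          simp
      have hUstep : U (k + 1) = U k + ∑ e ∈ G, p e * Real.log (p e) := by
        rw [hU (k+1), hU k, hB]
        push_cast
        ring
      calc ∑ τ ∈ (PhiN G L N).filter (fun τ => Prec σ τ)
            , zeta p q U τ
          = ∑ e ∈ G, ∑ τ ∈ ((PhiN G L N).filter (fun τ => Prec σ τ)).filter
              (fun τ => τ.1.getD σ.1.length (0,0) = e), zeta p q U τ :=
            (Finset.sum_fiberwise_of_maps_to hmaps _).symm
        _ = ∑ e ∈ G, zeta p q U (σ.1 ++ [e], σ.2) := by
            refine Finset.sum_congr rfl fun e he => ?_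
            rw [hfib e he, hIH e he]
        _ = zeta p q U σ := mart_p G p q U hp1 hp σ hw (by rw [← hk] at *; exact hUstep)

end Main

section Final
open Finset
open scoped Classical

theorem statement9'
    (n m : ℕ) (hm : 2 ≤ m) (hmn : m ≤ n)
    (G : Finset (ℕ × ℕ)) (hGne : G.Nonempty)
    (p : ℕ × ℕ → ℝ) (hp : ∀ e ∈ G, 0 < p e) (hp1 : ∑ e ∈ G, p e = 1)
    (q : ℕ → ℝ) (hq : ∀ j, q j = ∑ e ∈ G.filter (fun e => e.2 = j), p e)
    (L : ℕ → ℕ) (hL : ∀ k, L k = ⌊(k : ℝ) * (Real.log m / Real.log n)⌋₊)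
    (U : ℕ → ℝ)
    (hU : ∀ k, U k = (L k : ℝ) * ∑ e ∈ G, p e * Real.log (p e) +
      ((k : ℝ) - L k) * ∑ j ∈ G.image Prod.snd, q j * Real.log (q j))
    (Γ : Finset Word)
    (hΦ : ∀ σ ∈ Γ, InPhi G L σ)
    (hanti : ∀ σ ∈ Γ, ∀ τ ∈ Γ, σ ≠ τ → ¬ Prec σ τ ∧ ¬ Prec τ σ)
    (hcover : WSeq G ⊆ ⋃ σ ∈ Γ, Cyl σ) :
    ∑ σ ∈ Γ, wt p q σ * Real.log (wt p q σ) = ∑ σ ∈ Γ, wt p q σ * U (wlen σ) := by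
  obtain ⟨hL0, hstep⟩ := L_step L n m hm hmn hL
  have hqpos := q_pos G p q hp hq
  set N := Γ.sup wlen with hNdef
  -- unique antichain element below each full-level word
  have hexuniq : ∀ τ ∈ PhiN G L N, ∃ σ₀, Γ.filter (fun σ => Prec σ τ) = {σ₀} := by
    intro τ hτm
    obtain ⟨⟨hτ1, hτG⟩, ⟨hτ2, hτGy⟩⟩ := (mem_PhiN G L N τ).1 hτm
    obtain ⟨e₀, he₀⟩ := hGne
    set x : CodeSeq := (fun h => τ.1.getD h e₀, fun h => τ.2.getD h e₀.2) with hx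
    have hxW : x ∈ WSeq G := by
      constructor
      · intro h
        by_cases hh : h < τ.1.length
        · rw [show x.1 h = τ.1.getD h e₀ from rfl, List.getD_eq_getElem _ _ hh]
          exact hτG _ (List.getElem_mem _)
        · rw [show x.1 h = τ.1.getD h e₀ from rfl, List.getD_eq_default _ _ (by omega)]
          exact he₀
      · intro h
        by_cases hh : h < τ.2.length
        · rw [show x.2 h = τ.2.getD h e₀.2 from rfl, List.getD_eq_getElem _ _ hh]
          exact hτGy _ (List.getElem_mem _)
        · rw [show x.2 h = τ.2.getD h e₀.2 from rfl, List.getD_eq_default _ _ (by omega)]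
          exact Finset.mem_image_of_mem Prod.snd he₀
    have hxC := hcover hxW
    simp only [Set.mem_iUnion] at hxC
    obtain ⟨σ₀, hσ₀Γ, hσ₀x⟩ := hxC
    have hprec : ∀ σ ∈ Γ, x ∈ Cyl σ → Prec σ τ := by
      intro σ hσ hxσ
      obtain ⟨h1, hG1, hGy1⟩ := hΦ σ hσ
      have hwle : wlen σ ≤ N := Finset.le_sup hσ
      have hlen2 : σ.2.length = wlen σ - L (wlen σ) := by
        unfold wlen at h1 ⊢; omega
      constructor
      · apply prefix_of_getElem
        · rw [h1, hτ1]
          exact L_mono L hstep hwle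
        · intro i hi1 hi2
          have e1 := hxσ.1 i hi1
          have e2 : x.1 i = τ.1[i] := List.getD_eq_getElem _ _ hi2
          rw [List.get_eq_getElem] at e1
          rw [← e1, e2]
      · apply prefix_of_getElem
        · calc σ.2.length = wlen σ - L (wlen σ) := hlen2
            _ ≤ N - L N := colen_mono L hL0 hstep hwle
            _ = τ.2.length := hτ2.symm
        · intro i hi1 hi2
          have e1 := hxσ.2 i hi1
          have e2 : x.2 i = τ.2[i] := List.getD_eq_getElem _ _ hi2
          rw [List.get_eq_getElem] at e1
          rw [← e1, e2]
    have hcomp : ∀ a ∈ Γ, ∀ b ∈ Γ, Prec a τ → Prec b τ → wlen a ≤ wlen b → Prec a b := by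
      intro a ha b hb hat hbt hab
      obtain ⟨ha1, _, _⟩ := hΦ a ha
      obtain ⟨hb1, _, _⟩ := hΦ b hb
      have ha2 : a.2.length = wlen a - L (wlen a) := by unfold wlen at ha1 ⊢; omega
      have hb2 : b.2.length = wlen b - L (wlen b) := by unfold wlen at hb1 ⊢; omega
      constructor
      · exact List.prefix_of_prefix_length_le hat.1 hbt.1
          (by rw [ha1, hb1]; exact L_mono L hstep hab)
      · exact List.prefix_of_prefix_length_le hat.2 hbt.2
          (by rw [ha2, hb2]; exact colen_mono L hL0 hstep hab)
    refine ⟨σ₀, Finset.eq_singleton_iff_unique_mem.2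
      ⟨Finset.mem_filter.2 ⟨hσ₀Γ, hprec σ₀ hσ₀Γ hσ₀x⟩, ?_⟩⟩
    intro σ' hσ'
    obtain ⟨hσ'Γ, hσ'τ⟩ := Finset.mem_filter.1 hσ'
    by_contra hne
    rcases le_total (wlen σ') (wlen σ₀) with hle | hle
    · exact (hanti σ' hσ'Γ σ₀ hσ₀Γ hne).1
        (hcomp σ' hσ'Γ σ₀ hσ₀Γ hσ'τ (hprec σ₀ hσ₀Γ hσ₀x) hle)
    · exact (hanti σ' hσ'Γ σ₀ hσ₀Γ hne).2
        (hcomp σ₀ hσ₀Γ σ' hσ'Γ (hprec σ₀ hσ₀Γ hσ₀x) hσ'τ hle)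
  have hlevel := levelSum G p q L U hp hp1 hq hL0 hstep hU
  have hU0 : U 0 = 0 := by rw [hU 0, hL0]; push_cast; ring
  have hroot : ∑ τ ∈ PhiN G L N, zeta p q U τ = 0 := by
    have hr : InPhi G L (([] : List (ℕ × ℕ)), ([] : List ℕ)) := by
      refine ⟨?_, by simp, by simp⟩
      simp [wlen, hL0]
    have h := hlevel N (([] : List (ℕ × ℕ)), ([] : List ℕ)) hr
    rw [show wlen (([] : List (ℕ × ℕ)), ([] : List ℕ)) + N = N by simp [wlen]] at h
    rw [Finset.filter_true_of_mem (fun τ _ => ⟨List.nil_prefix, List.nil_prefix⟩)] at h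
    rw [h]
    simp [zeta, wt, wlen, hU0]
  have main : ∑ σ ∈ Γ, zeta p q U σ = 0 := by
    calc ∑ σ ∈ Γ, zeta p q U σ
        = ∑ σ ∈ Γ, ∑ τ ∈ (PhiN G L N).filter (fun τ => Prec σ τ), zeta p q U τ := by
          refine Finset.sum_congr rfl fun σ hσ => ?_
          have h := hlevel (N - wlen σ) σ (hΦ σ hσ)
          have hle : wlen σ ≤ N := Finset.le_sup hσ
          rw [show wlen σ + (N - wlen σ) = N by omega] at h
          exact h.symm
      _ = ∑ σ ∈ Γ, ∑ τ ∈ PhiN G L N, if Prec σ τ then zeta p q U τ else 0 := by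
          refine Finset.sum_congr rfl fun σ _ => ?_
          rw [Finset.sum_filter]
      _ = ∑ τ ∈ PhiN G L N, ∑ σ ∈ Γ, if Prec σ τ then zeta p q U τ else 0 :=
          Finset.sum_comm
      _ = ∑ τ ∈ PhiN G L N, zeta p q U τ := by
          refine Finset.sum_congr rfl fun τ hτ => ?_
          obtain ⟨σ₀, hs⟩ := hexuniq τ hτ
          rw [← Finset.sum_filter, hs, Finset.sum_singleton]
      _ = 0 := hroot
  simp only [zeta] at main
  rw [← sub_eq_zero, ← Finset.sum_sub_distrib]
  exact main

end Final

theorem statement9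
    (n m : ℕ) (hm : 2 ≤ m) (hmn : m ≤ n)
    (G : Finset (ℕ × ℕ)) (hGne : G.Nonempty)
    (p : ℕ × ℕ → ℝ) (hp : ∀ e ∈ G, 0 < p e) (hp1 : ∑ e ∈ G, p e = 1)
    (q : ℕ → ℝ) (hq : ∀ j, q j = ∑ e ∈ G.filter (fun e => e.2 = j), p e)
    (L : ℕ → ℕ) (hL : ∀ k, L k = ⌊(k : ℝ) * (Real.log m / Real.log n)⌋₊)
    (U : ℕ → ℝ)
    (hU : ∀ k, U k = (L k : ℝ) * ∑ e ∈ G, p e * Real.log (p e) +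
      ((k : ℝ) - L k) * ∑ j ∈ G.image Prod.snd, q j * Real.log (q j))
    (Γ : Finset Word)
    (hΦ : ∀ σ ∈ Γ, InPhi G L σ)
    (hanti : ∀ σ ∈ Γ, ∀ τ ∈ Γ, σ ≠ τ → ¬ Prec σ τ ∧ ¬ Prec τ σ)
    (hcover : WSeq G ⊆ ⋃ σ ∈ Γ, Cyl σ) :
    ∑ σ ∈ Γ, wt p q σ * Real.log (wt p q σ) = ∑ σ ∈ Γ, wt p q σ * U (wlen σ) := by
  exact statement9' n m hm hmn G hGne p hp hp1 q hq L hL U hU Γ hΦ hanti hcover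
end

section
/- For the swap operation replacing the family F(σ̃) = {σ̃(i) : i ∈ G_x(j_a)} by G(σ̃) = {σ̂(i) : i ∈ G_x(j_b)} (interchanging the roles of letters j_a and j_b as described), the total measures agree: Σ_{ω̃∈F(σ̃)} λ([ω̃]) = Σ_{τ̂∈G(σ̃)} λ([τ̂]) = q_{j_a} q_{j_b} λ([σ^♯]), where σ^♯ is the common word with both distinguished letters removed. -/
open Real Set

lemma sum_fst_filter (G : Finset (ℕ × ℕ)) (p : ℕ × ℕ → ℝ) (j : ℕ) :
    (∑ i ∈ (G.filter (fun e => e.2 = j)).image Prod.fst, p (i, j))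
      = ∑ e ∈ G.filter (fun e => e.2 = j), p e := by
  rw [Finset.sum_image]
  · apply Finset.sum_congr rfl
    intro e he
    simp only [Finset.mem_filter] at he
    rw [← he.2]
  · intro a ha b hb hab
    simp only [Finset.mem_coe, Finset.mem_filter] at ha hb
    have : a = (a.1, j) := by rw [← ha.2]
    rw [this, ← hb.2]
    exact congrArg (·, b.2) hab

lemma key (G : Finset (ℕ × ℕ)) (p : ℕ × ℕ → ℝ) (q : ℕ → ℝ)
    (hq : ∀ j, q j = ∑ e ∈ G.filter (fun e => e.2 = j), p e)
    (ωs : List (ℕ × ℕ)) (ρs : List ℕ) (j j' : ℕ) :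
    (∑ i ∈ (G.filter (fun e => e.2 = j)).image Prod.fst,
        wt p q (ωs ++ [(i, j)], ρs ++ [j'])) = q j * q j' * wt p q (ωs, ρs) := by
  have : ∀ i, wt p q (ωs ++ [(i, j)], ρs ++ [j'])
      = p (i, j) * (q j' * wt p q (ωs, ρs)) := by
    intro i
    simp [wt]
    ring
  simp only [this, ← Finset.sum_mul, sum_fst_filter G p j, ← hq j]; ring

theorem statement14
    (G : Finset (ℕ × ℕ)) (hGne : G.Nonempty)
    (p : ℕ × ℕ → ℝ) (hp : ∀ e ∈ G, 0 < p e) (hp1 : ∑ e ∈ G, p e = 1)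
    (q : ℕ → ℝ) (hq : ∀ j, q j = ∑ e ∈ G.filter (fun e => e.2 = j), p e)
    (ωs : List (ℕ × ℕ)) (ρs : List ℕ)
    (hωs : ∀ e ∈ ωs, e ∈ G) (hρs : ∀ j ∈ ρs, j ∈ G.image Prod.snd)
    (ja jb : ℕ) (hja : ja ∈ G.image Prod.snd) (hjb : jb ∈ G.image Prod.snd) :
    (∑ i ∈ (G.filter (fun e => e.2 = ja)).image Prod.fst,
        wt p q (ωs ++ [(i, ja)], ρs ++ [jb])) = q ja * q jb * wt p q (ωs, ρs) ∧
    (∑ i ∈ (G.filter (fun e => e.2 = jb)).image Prod.fst,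
        wt p q (ωs ++ [(i, jb)], ρs ++ [ja])) = q ja * q jb * wt p q (ωs, ρs) := by
  constructor
  · exact key G p q hq ωs ρs ja jb
  · rw [key G p q hq ωs ρs jb ja]; ring
end

section
/- There exists a constant C₁ (one can take C₁ = −2(max_j q_j)²·log(min_{(i,j)} p_{ij}) / (min_j q_j)²) such that for every word σ̃ as in the swap construction, |Σ_{ω̃∈F(σ̃)} λ([ω̃]) log λ([ω̃]) − Σ_{τ̂∈G(σ̃)} λ([τ̂]) log λ([τ̂])| ≤ C₁·Σ_{ω̃∈F(σ̃)} λ([ω̃]). -/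
open Real Set

lemma sum_img (G : Finset (ℕ × ℕ)) (j : ℕ) (g : ℕ → ℝ) :
    ∑ i ∈ (G.filter (fun e => e.2 = j)).image Prod.fst, g i
      = ∑ e ∈ G.filter (fun e => e.2 = j), g e.1 := by
  apply Finset.sum_image
  intro x hx y hy h
  have hx2 := (Finset.mem_filter.mp hx).2
  have hy2 := (Finset.mem_filter.mp hy).2
  exact Prod.ext h (by simp_all)

theorem statement15
    (G : Finset (ℕ × ℕ)) (hGne : G.Nonempty)
    (p : ℕ × ℕ → ℝ) (hp : ∀ e ∈ G, 0 < p e) (hp1 : ∑ e ∈ G, p e = 1)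
    (q : ℕ → ℝ) (hq : ∀ j, q j = ∑ e ∈ G.filter (fun e => e.2 = j), p e)
    (C₁ : ℝ)
    (hC₁ : C₁ = -2 * ((G.image Prod.snd).sup' (hGne.image _) q) ^ 2 *
      Real.log (G.inf' hGne p) / ((G.image Prod.snd).inf' (hGne.image _) q) ^ 2)
    (ωs : List (ℕ × ℕ)) (ρs : List ℕ)
    (hωs : ∀ e ∈ ωs, e ∈ G) (hρs : ∀ j ∈ ρs, j ∈ G.image Prod.snd)
    (ja jb : ℕ) (hja : ja ∈ G.image Prod.snd) (hjb : jb ∈ G.image Prod.snd) :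
    |(∑ i ∈ (G.filter (fun e => e.2 = ja)).image Prod.fst,
        wt p q (ωs ++ [(i, ja)], ρs ++ [jb]) *
          Real.log (wt p q (ωs ++ [(i, ja)], ρs ++ [jb]))) -
      ∑ i ∈ (G.filter (fun e => e.2 = jb)).image Prod.fst,
        wt p q (ωs ++ [(i, jb)], ρs ++ [ja]) *
          Real.log (wt p q (ωs ++ [(i, jb)], ρs ++ [ja]))| ≤
    C₁ * ∑ i ∈ (G.filter (fun e => e.2 = ja)).image Prod.fst,
      wt p q (ωs ++ [(i, ja)], ρs ++ [jb]) := by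
  -- Basic positivity facts
  have hp1le : ∀ e ∈ G, p e ≤ 1 := fun e he =>
    hp1 ▸ Finset.single_le_sum (fun e' he' => (hp e' he').le) he
  have hqpos : ∀ j ∈ G.image Prod.snd, 0 < q j := by
    intro j hj
    obtain ⟨e, heG, he2⟩ := Finset.mem_image.mp hj
    rw [hq]
    exact Finset.sum_pos (fun e' he' => hp e' (Finset.mem_filter.mp he').1)
      ⟨e, Finset.mem_filter.mpr ⟨heG, he2⟩⟩
  have hqle1 : ∀ j, q j ≤ 1 := by
    intro j
    rw [hq]
    calc ∑ e ∈ G.filter (fun e => e.2 = j), p e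
        ≤ ∑ e ∈ G, p e := Finset.sum_le_sum_of_subset_of_nonneg
          (Finset.filter_subset _ _) (fun e he _ => (hp e he).le)
      _ = 1 := hp1
  set pm := G.inf' hGne p with hpmdef
  set qmax := (G.image Prod.snd).sup' (hGne.image _) q with hqmaxdef
  set qmin := (G.image Prod.snd).inf' (hGne.image _) q with hqmindef
  have hpm_pos : 0 < pm := by
    obtain ⟨e, he, hee⟩ := Finset.exists_mem_eq_inf' hGne p
    rw [hpmdef, hee]; exact hp e he
  have hpm_le : ∀ e ∈ G, pm ≤ p e := fun e he => Finset.inf'_le p he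
  have hpm_le1 : pm ≤ 1 := by
    obtain ⟨e, he, hee⟩ := Finset.exists_mem_eq_inf' hGne p
    rw [hpmdef, hee]; exact hp1le e he
  have hq_ge_pm : ∀ j ∈ G.image Prod.snd, pm ≤ q j := by
    intro j hj
    obtain ⟨e, heG, he2⟩ := Finset.mem_image.mp hj
    rw [hq]
    calc pm ≤ p e := hpm_le e heG
      _ ≤ ∑ e' ∈ G.filter (fun e' => e'.2 = j), p e' :=
        Finset.single_le_sum (fun e' he' => (hp e' (Finset.mem_filter.mp he').1).le)
          (Finset.mem_filter.mpr ⟨heG, he2⟩)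
  have hqmin_pos : 0 < qmin := by
    obtain ⟨j, hj, hjj⟩ := Finset.exists_mem_eq_inf' (hGne.image Prod.snd) q
    rw [hqmindef, hjj]; exact hqpos j hj
  have hqmin_ja : qmin ≤ q ja := Finset.inf'_le q hja
  have hqmin_jb : qmin ≤ q jb := Finset.inf'_le q hjb
  have hqmax_ja : q ja ≤ qmax := Finset.le_sup' q hja
  have hqmax_jb : q jb ≤ qmax := Finset.le_sup' q hjb
  have hqmax_pos : 0 < qmax := lt_of_lt_of_le (hqpos ja hja) hqmax_ja
  -- the base weight t
  set t : ℝ := (ωs.map p).prod * (ρs.map q).prod with htdef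
  have ht : 0 < t := by
    apply mul_pos <;> apply List.prod_pos <;> intro a ha
    · obtain ⟨e, he, rfl⟩ := List.mem_map.mp ha
      exact hp e (hωs e he)
    · obtain ⟨j, hj, rfl⟩ := List.mem_map.mp ha
      exact hqpos j (hρs j hj)
  have hwt : ∀ (e : ℕ × ℕ) (j : ℕ),
      wt p q (ωs ++ [e], ρs ++ [j]) = t * (p e * q j) := by
    intro e j
    simp only [wt, List.map_append, List.prod_append, List.map_cons, List.map_nil,
      List.prod_cons, List.prod_nil, htdef]
    ring
  -- log bound M
  set M : ℝ := 2 * Real.log pm with hMdef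
  have hlogpm : Real.log pm ≤ 0 := Real.log_nonpos hpm_pos.le hpm_le1
  have hM : M ≤ 0 := by simp only [hMdef]; linarith
  -- per-element log bounds
  have hlogbd : ∀ (j : ℕ), j ∈ G.image Prod.snd → ∀ e ∈ G,
      M ≤ Real.log (p e * q j) ∧ Real.log (p e * q j) ≤ 0 := by
    intro j hj e he
    constructor
    · have h1 : pm * pm ≤ p e * q j :=
        mul_le_mul (hpm_le e he) (hq_ge_pm j hj) hpm_pos.le (hp e he).le
      have h2 : Real.log (pm * pm) ≤ Real.log (p e * q j) :=
        Real.log_le_log (by positivity) h1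
      rw [Real.log_mul hpm_pos.ne' hpm_pos.ne'] at h2
      simp only [hMdef]; linarith
    · exact Real.log_nonpos (mul_pos (hp e he) (hqpos j hj)).le
        (mul_le_one₀ (hp1le e he) (hqpos j hj).le (hqle1 j))
  -- sums S_j
  have hSbd : ∀ (j j' : ℕ), j ∈ G.image Prod.snd → j' ∈ G.image Prod.snd →
      q j * M ≤ (∑ e ∈ G.filter (fun e => e.2 = j), p e * Real.log (p e * q j')) ∧
      (∑ e ∈ G.filter (fun e => e.2 = j), p e * Real.log (p e * q j')) ≤ 0 := by
    intro j j' hj hj'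
    constructor
    · have : ∑ e ∈ G.filter (fun e => e.2 = j), p e * M
          ≤ ∑ e ∈ G.filter (fun e => e.2 = j), p e * Real.log (p e * q j') := by
        apply Finset.sum_le_sum
        intro e he
        have heG := (Finset.mem_filter.mp he).1
        exact mul_le_mul_of_nonneg_left ((hlogbd j' hj' e heG).1) (hp e heG).le
      calc q j * M = (∑ e ∈ G.filter (fun e => e.2 = j), p e) * M := by rw [← hq]
        _ = ∑ e ∈ G.filter (fun e => e.2 = j), p e * M := by rw [Finset.sum_mul]
        _ ≤ _ := this
    · apply Finset.sum_nonpos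
      intro e he
      have heG := (Finset.mem_filter.mp he).1
      have := (hlogbd j' hj' e heG).2
      nlinarith [(hp e heG).le]
  -- expansion of the entropy sums
  have expand : ∀ (j j' : ℕ), j ∈ G.image Prod.snd → j' ∈ G.image Prod.snd →
      ∑ e ∈ G.filter (fun e => e.2 = j), (t * (p e * q j')) * Real.log (t * (p e * q j'))
      = t * (q j * q j') * Real.log t
        + t * (q j' * ∑ e ∈ G.filter (fun e => e.2 = j),
            p e * Real.log (p e * q j')) := by
    intro j j' hj hj'
    have hqj' : 0 < q j' := hqpos j' hj'
    have h1 : ∑ e ∈ G.filter (fun e => e.2 = j),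
        (t * (p e * q j')) * Real.log (t * (p e * q j'))
        = ∑ e ∈ G.filter (fun e => e.2 = j),
          ((t * q j' * Real.log t) * p e + (t * q j') * (p e * Real.log (p e * q j'))) := by
      refine Finset.sum_congr rfl fun e he => ?_
      have hpe : 0 < p e := hp e (Finset.mem_filter.mp he).1
      rw [Real.log_mul ht.ne' (mul_pos hpe hqj').ne']
      ring
    rw [h1, Finset.sum_add_distrib, ← Finset.mul_sum, ← Finset.mul_sum, ← hq j]
    ring
  -- convert the sums over images
  have hconv : ∀ (j j' : ℕ),
      ∑ i ∈ (G.filter (fun e => e.2 = j)).image Prod.fst,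
        wt p q (ωs ++ [(i, j)], ρs ++ [j']) *
          Real.log (wt p q (ωs ++ [(i, j)], ρs ++ [j']))
      = ∑ e ∈ G.filter (fun e => e.2 = j),
          (t * (p e * q j')) * Real.log (t * (p e * q j')) := by
    intro j j'
    rw [sum_img]
    refine Finset.sum_congr rfl fun e he => ?_
    have he2 : e.2 = j := (Finset.mem_filter.mp he).2
    have hee : (e.1, j) = e := by rw [← he2]
    rw [hee, hwt]
  have hconvw :
      ∑ i ∈ (G.filter (fun e => e.2 = ja)).image Prod.fst,
        wt p q (ωs ++ [(i, ja)], ρs ++ [jb]) = t * (q ja * q jb) := by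
    rw [sum_img]
    have h1 : ∑ e ∈ G.filter (fun e => e.2 = ja),
        wt p q (ωs ++ [(e.1, ja)], ρs ++ [jb])
        = ∑ e ∈ G.filter (fun e => e.2 = ja), t * (p e * q jb) := by
      refine Finset.sum_congr rfl fun e he => ?_
      have he2 : e.2 = ja := (Finset.mem_filter.mp he).2
      have hee : (e.1, ja) = e := by rw [← he2]
      rw [hee, hwt]
    rw [h1, ← Finset.mul_sum]
    have : ∑ e ∈ G.filter (fun e => e.2 = ja), p e * q jb
        = (∑ e ∈ G.filter (fun e => e.2 = ja), p e) * q jb := by rw [Finset.sum_mul]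
    rw [this, ← hq]
  rw [hconv ja jb, hconv jb ja, expand ja jb hja hjb, expand jb ja hjb hja, hconvw]
  set Sa := ∑ e ∈ G.filter (fun e => e.2 = ja), p e * Real.log (p e * q jb) with hSadef
  set Sb := ∑ e ∈ G.filter (fun e => e.2 = jb), p e * Real.log (p e * q ja) with hSbdef
  have hSa := hSbd ja jb hja hjb
  have hSb := hSbd jb ja hjb hja
  have hdiff : (t * (q ja * q jb) * Real.log t + t * (q jb * Sa))
      - (t * (q jb * q ja) * Real.log t + t * (q ja * Sb))
      = t * (q jb * Sa - q ja * Sb) := by ring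
  rw [hdiff, abs_mul, abs_of_pos ht]
  have hC₁nonneg : 0 ≤ C₁ := by
    rw [hC₁]
    apply div_nonneg _ (by positivity)
    nlinarith [hqmax_pos, hlogpm]
  have hCmin : C₁ * qmin ^ 2 = -2 * qmax ^ 2 * Real.log pm := by
    rw [hC₁, div_mul_cancel₀ _ (pow_ne_zero 2 hqmin_pos.ne')]
  have hqq : qmin ^ 2 ≤ q ja * q jb := by nlinarith [hqpos ja hja, hqpos jb hjb]
  have hstep : C₁ * qmin ^ 2 ≤ C₁ * (q ja * q jb) :=
    mul_le_mul_of_nonneg_left hqq hC₁nonneg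
  -- bounds on A = q jb * Sa and B = q ja * Sb
  have hA_ub : q jb * Sa ≤ 0 := mul_nonpos_of_nonneg_of_nonpos (hqpos jb hjb).le hSa.2
  have hB_ub : q ja * Sb ≤ 0 := mul_nonpos_of_nonneg_of_nonpos (hqpos ja hja).le hSb.2
  have hqqmax : q ja * q jb ≤ qmax ^ 2 := by nlinarith [hqpos ja hja, hqpos jb hjb]
  have hA_lb : qmax ^ 2 * M ≤ q jb * Sa := by
    have h1 : q jb * (q ja * M) ≤ q jb * Sa :=
      mul_le_mul_of_nonneg_left hSa.1 (hqpos jb hjb).le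
    have h3 : qmax ^ 2 * M ≤ (q ja * q jb) * M := mul_le_mul_of_nonpos_right hqqmax hM
    have h4 : (q ja * q jb) * M = q jb * (q ja * M) := by ring
    linarith
  have hB_lb : qmax ^ 2 * M ≤ q ja * Sb := by
    have h1 : q ja * (q jb * M) ≤ q ja * Sb :=
      mul_le_mul_of_nonneg_left hSb.1 (hqpos ja hja).le
    have h3 : qmax ^ 2 * M ≤ (q ja * q jb) * M := mul_le_mul_of_nonpos_right hqqmax hM
    have h4 : (q ja * q jb) * M = q ja * (q jb * M) := by ring
    linarith
  have hMC : -(qmax ^ 2 * M) = C₁ * qmin ^ 2 := by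
    rw [hCmin, hMdef]; ring
  have key : |q jb * Sa - q ja * Sb| ≤ C₁ * (q ja * q jb) := by
    rw [abs_le]
    constructor
    · linarith
    · linarith
  calc t * |q jb * Sa - q ja * Sb| ≤ t * (C₁ * (q ja * q jb)) :=
        mul_le_mul_of_nonneg_left key ht.le
    _ = C₁ * (t * (q ja * q jb)) := by ring
end
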